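/- arXiv:2405.16705 — 7 statements merged into one kernel-verified Lean document; each statement's English description precedes it below -/
import Mathlib

section
/- Let q > 0 be a real number with q ≠ 1. Then for all real numbers a, b ≥ 0 and c, d > 0, equality (a+b)^q / (c+d)^{q-1} = a^q / c^{q-1} + b^q / d^{q-1} holds if and only if a·d = b·c. -/
/-!
Writing `x = a / c`, `y = b / d`, every term has the perspective form `u ^ q / v ^ (q - 1) = v * (u / v) ^ q`,
and the identity becomes `(c + d) f((c x + d y) / (c + d)) = c f(x) + d f(y)` for `f = (· ^ q)`.
Since `f` is strictly convex (`q > 1`) or strictly concave (`q < 1`) on `[0, ∞)`, this two-point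
Jensen equality holds exactly when `x = y`, i.e. `a d = b c`.
-/

open Set

theorem Real.rpow_div_rpow_sub_one {u v : ℝ} (q : ℝ) (hu : 0 ≤ u) (hv : 0 < v) :
    u ^ q / v ^ (q - 1) = v * (u / v) ^ q := by
  have hvq : 0 < v ^ q := Real.rpow_pos_of_pos hv q
  rw [Real.div_rpow hu hv.le, Real.rpow_sub hv, Real.rpow_one]
  field_simp

theorem StrictConvexOn.weighted_jensen_eq_iff {s : Set ℝ} {f : ℝ → ℝ} (hf : StrictConvexOn ℝ s f)
    {x y c d : ℝ} (hx : x ∈ s) (hy : y ∈ s) (hc : 0 < c) (hd : 0 < d) :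
    (c + d) * f ((c * x + d * y) / (c + d)) = c * f x + d * f y ↔ x = y := by
  have hcd : 0 < c + d := add_pos hc hd
  constructor
  · intro heq
    by_contra hxy
    have hlt := hf.2 hx hy hxy (div_pos hc hcd) (div_pos hd hcd) (by field_simp)
    have hmid : (c / (c + d)) • x + (d / (c + d)) • y = (c * x + d * y) / (c + d) := by
      simp only [smul_eq_mul]; field_simp
    rw [hmid, smul_eq_mul, smul_eq_mul] at hlt
    have := mul_lt_mul_of_pos_left hlt hcd
    have hrhs : (c + d) * (c / (c + d) * f x + d / (c + d) * f y) = c * f x + d * f y := by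
      field_simp
    linarith
  · rintro rfl
    rw [show (c * x + d * x) / (c + d) = x by field_simp]
    ring

theorem StrictConcaveOn.weighted_jensen_eq_iff {s : Set ℝ} {f : ℝ → ℝ} (hf : StrictConcaveOn ℝ s f)
    {x y c d : ℝ} (hx : x ∈ s) (hy : y ∈ s) (hc : 0 < c) (hd : 0 < d) :
    (c + d) * f ((c * x + d * y) / (c + d)) = c * f x + d * f y ↔ x = y := by
  rw [← hf.neg.weighted_jensen_eq_iff hx hy hc hd]
  simp only [Pi.neg_apply]
  constructor <;> intro h <;> linarith

theorem Real.rpow_weighted_jensen_eq_iff {q x y c d : ℝ} (hq0 : 0 < q) (hq1 : q ≠ 1)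
    (hx : 0 ≤ x) (hy : 0 ≤ y) (hc : 0 < c) (hd : 0 < d) :
    (c + d) * ((c * x + d * y) / (c + d)) ^ q = c * x ^ q + d * y ^ q ↔ x = y := by
  rcases hq1.lt_or_gt with hlt | hgt
  · exact (Real.strictConcaveOn_rpow hq0 hlt).weighted_jensen_eq_iff hx hy hc hd
  · exact (strictConvexOn_rpow hgt).weighted_jensen_eq_iff hx hy hc hd

theorem superposition_inequality_equality_iff (q : ℝ) (hq0 : 0 < q) (hq1 : q ≠ 1)
    (a b c d : ℝ) (ha : 0 ≤ a) (hb : 0 ≤ b) (hc : 0 < c) (hd : 0 < d) :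
    (a + b) ^ q / (c + d) ^ (q - 1) = a ^ q / c ^ (q - 1) + b ^ q / d ^ (q - 1) ↔
      a * d = b * c := by
  have hsum : a + b = c * (a / c) + d * (b / d) := by field_simp
  rw [Real.rpow_div_rpow_sub_one q (add_nonneg ha hb) (add_pos hc hd),
    Real.rpow_div_rpow_sub_one q ha hc, Real.rpow_div_rpow_sub_one q hb hd, hsum,
    Real.rpow_weighted_jensen_eq_iff hq0 hq1 (div_nonneg ha hc.le) (div_nonneg hb hd.le) hc hd,
    div_eq_div_iff hc.ne' hd.ne']
end

section
/- (Superposition principle, decreasing case.) Let N ≥ 2 be an integer, p ≥ 2 a real number, 0 < r₀ < R₀ ≤ ∞, and let V be a continuous function on (r₀, R₀) with V ≥ 0. Let u, v be C² functions on (r₀, R₀) such that 0 < v(r) ≤ u(r) and u'(r) ≤ v'(r) < 0 for all r ∈ (r₀, R₀). If u is a radial subsolution and v is a radial supersolution of −Δ_p u − V|u|^{p−2}u = 0, then u − v is a radial subsolution of the same equation, i.e. −|u'(r) − v'(r)|^{p−2}·L(u−v)(r) − V(r)·(u(r) − v(r))^{p−1} ≤ 0 for all r ∈ (r₀, R₀).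 -/
/-!
Write `q = p - 1`, `a = |v'|`, `b = |u'|`, so `0 < a ≤ b` and `|u' - v'| = b - a`. Since `Lrad` is
linear, `Lrad (u - v) = Lrad u - Lrad v`, and the sub- and supersolution inequalities bound
`Lrad u` below by `-V u^q / b^(q-1)` and `Lrad v` above by `-V v^q / a^(q-1)`. As `V ≥ 0`, the
claim then reduces to `u^q / b^(q-1) ≤ v^q / a^(q-1) + (u - v)^q / (b - a)^(q-1)`, i.e. to the
subadditivity of the perspective `(x, y) ↦ x^q / y^(q-1)` of the convex function `x ↦ x^q`. Being
convex and positively homogeneous, it lies above its supporting plane at `(u, b)` at both points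
`(v, a)` and `(u - v, b - a)`, and equals the sum of the two plane values at `(u, b)`.
-/

/-- The ordinary differential operator `L u (r) = (p-1) u''(r) + ((N-1)/r) u'(r)`,
so that for a radial function the p-Laplacian is `Δ_p u = |u'(r)|^{p-2} L u (r)`. -/
noncomputable def Lrad (N : ℕ) (p : ℝ) (u : ℝ → ℝ) (r : ℝ) : ℝ :=
  (p - 1) * deriv (deriv u) r + (((N : ℝ) - 1) / r) * deriv u r

open Filter

namespace Real

variable {q : ℝ}

lemma rpow_sub_one_mul_self {x : ℝ} (hx : 0 ≤ x) (hq : 1 ≤ q) : x ^ (q - 1) * x = x ^ q := by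
  rw [← rpow_add_one' hx (by linarith), sub_add_cancel]

lemma rpow_tangent_line_le {x T : ℝ} (hq : 1 ≤ q) (hx : 0 ≤ x) (hT : 0 ≤ T) :
    q * T ^ (q - 1) * x - (q - 1) * T ^ q ≤ x ^ q := by
  have hq0 : 0 < q := by linarith
  -- weighted AM-GM with weights `1 / q` and `(q - 1) / q`
  have amgm := geom_mean_le_arith_mean2_weighted (w₁ := 1 / q) (w₂ := (q - 1) / q)
    (by positivity) (div_nonneg (by linarith) hq0.le) (rpow_nonneg hx q) (rpow_nonneg hT q)
    (by field_simp; ring)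
  rw [← rpow_mul hx, mul_one_div_cancel hq0.ne', rpow_one, ← rpow_mul hT,
    mul_div_cancel₀ _ hq0.ne'] at amgm
  have := mul_le_mul_of_nonneg_left amgm hq0.le
  field_simp at this
  linarith

/-- The supporting plane, along the ray `x = t * y`, of the perspective
`(x, y) ↦ x ^ q / y ^ (q - 1)` of `x ↦ x ^ q`, multiplied through by `y ^ (q - 1)`. -/
lemma rpow_perspective_support {x y t : ℝ} (hq : 1 ≤ q) (hx : 0 ≤ x) (hy : 0 ≤ y) (ht : 0 ≤ t) :
    y ^ (q - 1) * (q * t ^ (q - 1) * x - (q - 1) * t ^ q * y) ≤ x ^ q := by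
  have tangent := rpow_tangent_line_le hq hx (mul_nonneg ht hy)
  rw [mul_rpow ht hy, mul_rpow ht hy, ← rpow_sub_one_mul_self hy hq] at tangent
  linarith

/-- Subadditivity of the perspective `(x, y) ↦ x ^ q / y ^ (q - 1)`, multiplied through by the
denominators. -/
lemma rpow_perspective_add_le {x₁ x₂ y₁ y₂ : ℝ} (hq : 1 ≤ q) (hx₁ : 0 ≤ x₁) (hx₂ : 0 ≤ x₂)
    (hy₁ : 0 ≤ y₁) (hy₂ : 0 ≤ y₂) (hy : 0 < y₁ + y₂) :
    y₁ ^ (q - 1) * y₂ ^ (q - 1) * (x₁ + x₂) ^ q ≤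
      (y₁ + y₂) ^ (q - 1) * (y₂ ^ (q - 1) * x₁ ^ q + y₁ ^ (q - 1) * x₂ ^ q) := by
  set s := y₁ + y₂
  set t := (x₁ + x₂) / s
  have ht : 0 ≤ t := by positivity
  -- the supporting plane at `(x₁ + x₂, s)` is tight there, by homogeneity
  have tight : (x₁ + x₂) ^ q =
      s ^ (q - 1) * ((q * t ^ (q - 1) * x₁ - (q - 1) * t ^ q * y₁) +
        (q * t ^ (q - 1) * x₂ - (q - 1) * t ^ q * y₂)) := by
    have hsum : x₁ + x₂ = t * s := (div_mul_cancel₀ _ hy.ne').symm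
    have hts : t ^ (q - 1) * (x₁ + x₂) = t ^ q * s := by
      rw [hsum, ← mul_assoc, rpow_sub_one_mul_self ht hq]
    have hpow : (x₁ + x₂) ^ q = s ^ (q - 1) * (t ^ q * s) := by
      rw [hsum, mul_rpow ht hy.le, ← rpow_sub_one_mul_self hy.le hq]; ring
    rw [hpow]
    linear_combination -q * s ^ (q - 1) * hts
  have support₁ := rpow_perspective_support hq hx₁ hy₁ ht
  have support₂ := rpow_perspective_support hq hx₂ hy₂ ht
  have hA : 0 ≤ y₁ ^ (q - 1) := rpow_nonneg hy₁ _
  have hB : 0 ≤ y₂ ^ (q - 1) := rpow_nonneg hy₂ _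
  have hS : 0 ≤ s ^ (q - 1) := rpow_nonneg hy.le _
  rw [tight]
  nlinarith [mul_le_mul_of_nonneg_left support₁ (mul_nonneg hS hB),
    mul_le_mul_of_nonneg_left support₂ (mul_nonneg hS hA)]

end Real

/-- Here `q = p - 1`, `a = |v'|`, `b = |u'|`, and `Lu`, `Lv` are the values of `Lrad` on `u`, `v`. -/
lemma superposition_decreasing_pointwise {q V u v a b Lu Lv : ℝ} (hq : 1 ≤ q) (hV : 0 ≤ V)
    (hv : 0 < v) (hvu : v ≤ u) (ha : 0 < a) (hab : a ≤ b)
    (hsub : -(b ^ (q - 1) * Lu) - V * u ^ q ≤ 0) (hsup : 0 ≤ -(a ^ (q - 1) * Lv) - V * v ^ q) :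
    -((b - a) ^ (q - 1) * (Lu - Lv)) - V * (u - v) ^ q ≤ 0 := by
  have perspective := Real.rpow_perspective_add_le hq hv.le (sub_nonneg.2 hvu) ha.le
    (sub_nonneg.2 hab) (by linarith)
  rw [add_sub_cancel, add_sub_cancel] at perspective
  have hA : 0 < a ^ (q - 1) := Real.rpow_pos_of_pos ha _
  have hB : 0 < b ^ (q - 1) := Real.rpow_pos_of_pos (by linarith) _
  have hC : 0 ≤ (b - a) ^ (q - 1) := Real.rpow_nonneg (by linarith) _
  suffices 0 ≤ a ^ (q - 1) * b ^ (q - 1) * ((b - a) ^ (q - 1) * (Lu - Lv) + V * (u - v) ^ q) by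
    linarith [(mul_nonneg_iff_of_pos_left (mul_pos hA hB)).1 this]
  nlinarith [mul_le_mul_of_nonneg_left hsub (mul_nonneg hC hA.le),
    mul_le_mul_of_nonneg_left hsup (mul_nonneg hC hB.le),
    mul_le_mul_of_nonneg_left perspective hV]

lemma ContDiffOn.differentiableAt_deriv_of_isOpen {s : Set ℝ} {f : ℝ → ℝ} {x : ℝ}
    (hf : ContDiffOn ℝ 2 f s) (hs : IsOpen s) (hx : x ∈ s) : DifferentiableAt ℝ (deriv f) x :=
  ((hf.deriv_of_isOpen (m := 1) hs le_rfl).differentiableOn one_ne_zero).differentiableAt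
    (hs.mem_nhds hx)

lemma Lrad_sub_of_contDiffOn {N : ℕ} {p r : ℝ} {s : Set ℝ} {u v : ℝ → ℝ} (hs : IsOpen s)
    (hu : ContDiffOn ℝ 2 u s) (hv : ContDiffOn ℝ 2 v s) (hr : r ∈ s) :
    Lrad N p (fun x => u x - v x) r = Lrad N p u r - Lrad N p v r := by
  have hderiv : ∀ x ∈ s, deriv (fun x => u x - v x) x = deriv u x - deriv v x := fun x hx =>
    deriv_sub ((hu.differentiableOn two_ne_zero).differentiableAt (hs.mem_nhds hx))
      ((hv.differentiableOn two_ne_zero).differentiableAt (hs.mem_nhds hx))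
  have hderiv₂ : deriv (deriv fun x => u x - v x) r = deriv (deriv u) r - deriv (deriv v) r := by
    rw [EventuallyEq.deriv_eq (eventually_of_mem (hs.mem_nhds hr) hderiv)]
    exact deriv_sub (hu.differentiableAt_deriv_of_isOpen hs hr)
      (hv.differentiableAt_deriv_of_isOpen hs hr)
  simp only [Lrad, hderiv₂, hderiv r hr]
  ring

theorem superposition_decreasing_general (N : ℕ) (p : ℝ) (hp : 2 ≤ p)
    (r₀ : ℝ) (R₀ : EReal)
    (V u v : ℝ → ℝ)
    (hV : ∀ r : ℝ, r₀ < r → (r : EReal) < R₀ → 0 ≤ V r)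
    (hu : ContDiffOn ℝ 2 u {r : ℝ | r₀ < r ∧ (r : EReal) < R₀})
    (hv : ContDiffOn ℝ 2 v {r : ℝ | r₀ < r ∧ (r : EReal) < R₀})
    (hvu : ∀ r : ℝ, r₀ < r → (r : EReal) < R₀ → 0 < v r ∧ v r ≤ u r)
    (hder : ∀ r : ℝ, r₀ < r → (r : EReal) < R₀ → deriv u r ≤ deriv v r ∧ deriv v r < 0)
    (hsub : ∀ r : ℝ, r₀ < r → (r : EReal) < R₀ →
      -(|deriv u r| ^ (p - 2) * Lrad N p u r) - V r * (|u r| ^ (p - 2) * u r) ≤ 0)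
    (hsup : ∀ r : ℝ, r₀ < r → (r : EReal) < R₀ →
      0 ≤ -(|deriv v r| ^ (p - 2) * Lrad N p v r) - V r * (|v r| ^ (p - 2) * v r)) :
    ∀ r : ℝ, r₀ < r → (r : EReal) < R₀ →
      -(|deriv u r - deriv v r| ^ (p - 2) * Lrad N p (fun s => u s - v s) r)
        - V r * (u r - v r) ^ (p - 1) ≤ 0 := by
  intro r hr hrR
  have hS : IsOpen {r : ℝ | r₀ < r ∧ (r : EReal) < R₀} :=
    (isOpen_lt continuous_const continuous_id).inter
      (isOpen_lt continuous_coe_real_ereal continuous_const)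
  obtain ⟨hv_pos, hv_le⟩ := hvu r hr hrR
  obtain ⟨hu'_le, hv'_neg⟩ := hder r hr hrR
  have hq : 1 ≤ p - 1 := by linarith
  have hexp : p - 2 = p - 1 - 1 := by ring
  have hsub_r := hsub r hr hrR
  have hsup_r := hsup r hr hrR
  rw [abs_of_neg (hu'_le.trans_lt hv'_neg), abs_of_pos (hv_pos.trans_le hv_le), hexp,
    Real.rpow_sub_one_mul_self (hv_pos.trans_le hv_le).le hq] at hsub_r
  rw [abs_of_neg hv'_neg, abs_of_pos hv_pos, hexp, Real.rpow_sub_one_mul_self hv_pos.le hq]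
    at hsup_r
  rw [Lrad_sub_of_contDiffOn hS hu hv ⟨hr, hrR⟩, abs_of_nonpos (sub_nonpos.2 hu'_le), hexp,
    show -(deriv u r - deriv v r) = -deriv u r - -deriv v r by ring]
  exact superposition_decreasing_pointwise hq (hV r hr hrR) hv_pos hv_le (neg_pos.2 hv'_neg)
    (neg_le_neg hu'_le) hsub_r hsup_r

/-- Superposition principle, decreasing case: if `u` is a radial subsolution and `v`
a radial supersolution of `-Δ_p u - V |u|^{p-2} u = 0` on `(r₀, R₀)`, with
`0 < v ≤ u` and `u' ≤ v' < 0`, `V ≥ 0`, `p ≥ 2`, then `u - v` is a radial subsolution. -/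
theorem superposition_decreasing (N : ℕ) (hN : 2 ≤ N) (p : ℝ) (hp : 2 ≤ p)
    (r₀ : ℝ) (R₀ : EReal) (hr₀ : 0 < r₀) (hR : (r₀ : EReal) < R₀)
    (V u v : ℝ → ℝ)
    (hVcont : ContinuousOn V {r : ℝ | r₀ < r ∧ (r : EReal) < R₀})
    (hV : ∀ r : ℝ, r₀ < r → (r : EReal) < R₀ → 0 ≤ V r)
    (hu : ContDiffOn ℝ 2 u {r : ℝ | r₀ < r ∧ (r : EReal) < R₀})
    (hv : ContDiffOn ℝ 2 v {r : ℝ | r₀ < r ∧ (r : EReal) < R₀})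
    (hvu : ∀ r : ℝ, r₀ < r → (r : EReal) < R₀ → 0 < v r ∧ v r ≤ u r)
    (hder : ∀ r : ℝ, r₀ < r → (r : EReal) < R₀ → deriv u r ≤ deriv v r ∧ deriv v r < 0)
    (hsub : ∀ r : ℝ, r₀ < r → (r : EReal) < R₀ →
      -(|deriv u r| ^ (p - 2) * Lrad N p u r) - V r * (|u r| ^ (p - 2) * u r) ≤ 0)
    (hsup : ∀ r : ℝ, r₀ < r → (r : EReal) < R₀ →
      0 ≤ -(|deriv v r| ^ (p - 2) * Lrad N p v r) - V r * (|v r| ^ (p - 2) * v r)) :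
    ∀ r : ℝ, r₀ < r → (r : EReal) < R₀ →
      -(|deriv u r - deriv v r| ^ (p - 2) * Lrad N p (fun s => u s - v s) r)
        - V r * (u r - v r) ^ (p - 1) ≤ 0 :=
  superposition_decreasing_general N p hp r₀ R₀ V u v hV hu hv hvu hder hsub hsup
end

section
/- (Superposition principle, increasing case.) Let N ≥ 2 be an integer, p ≥ 2 a real number, 0 < r₀ < R₀ ≤ ∞, and let V be a continuous function on (r₀, R₀) with V ≥ 0. Let u, v be C² functions on (r₀, R₀) such that 0 < v(r) ≤ u(r) and u'(r) ≥ v'(r) > 0 for all r ∈ (r₀, R₀). If u is a radial subsolution and v is a radial supersolution of −Δ_p u − V|u|^{p−2}u = 0, then u − v is a radial subsolution of the same equation, i.e. −|u'(r) − v'(r)|^{p−2}·L(u−v)(r) − V(r)·(u(r) − v(r))^{p−1} ≤ 0 for all r ∈ (r₀, R₀). -/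
/-!
The operator `Lrad` is linear, so `Lrad (u - v) = Lrad u - Lrad v`, and the sign conditions remove
the absolute values. Dividing the two differential inequalities by `u'^(p-2)` and `v'^(p-2)` gives
`Lrad u - Lrad v ≥ V (v^(p-1) / v'^(p-2) - u^(p-1) / u'^(p-2))`. The claim then follows from the
subadditivity of `(x, b) ↦ x^(p-1) / b^(p-2) = b (x / b)^(p-1)`, the perspective of the convex
function `t ↦ t^(p-1)`, applied to `(u, u') = (v, v') + (u - v, u' - v')`.
-/

open Set Real Filter Topology

theorem ConvexOn.perspective_add_le {E : Type*} [AddCommGroup E] [Module ℝ E] {s : Set E}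
    {f : E → ℝ} (hf : ConvexOn ℝ s f) {x y : E} {b c : ℝ} (hb : 0 < b) (hc : 0 < c)
    (hx : b⁻¹ • x ∈ s) (hy : c⁻¹ • y ∈ s) :
    (b + c) * f ((b + c)⁻¹ • (x + y)) ≤ b * f (b⁻¹ • x) + c * f (c⁻¹ • y) := by
  have hbc : 0 < b + c := by positivity
  have hcomb : (b / (b + c)) • b⁻¹ • x + (c / (b + c)) • c⁻¹ • y = (b + c)⁻¹ • (x + y) := by
    simp only [smul_smul, smul_add]
    congr 2 <;> field_simp
  have hjensen := hf.2 hx hy (div_pos hb hbc).le (div_pos hc hbc).le (by field_simp)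
  rw [hcomb, smul_eq_mul, smul_eq_mul] at hjensen
  calc (b + c) * f ((b + c)⁻¹ • (x + y))
      ≤ (b + c) * (b / (b + c) * f (b⁻¹ • x) + c / (b + c) * f (c⁻¹ • y)) :=
        mul_le_mul_of_nonneg_left hjensen hbc.le
    _ = b * f (b⁻¹ • x) + c * f (c⁻¹ • y) := by field_simp

theorem mul_inv_mul_rpow {b x : ℝ} (s : ℝ) (hb : 0 < b) (hx : 0 ≤ x) :
    b * (b⁻¹ * x) ^ s = x ^ s / b ^ (s - 1) := by
  rw [mul_rpow (inv_nonneg.2 hb.le) hx, inv_rpow hb.le, rpow_sub_one hb.ne']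
  field_simp

theorem add_rpow_div_rpow_sub_one_le {s x y b c : ℝ} (hs : 1 ≤ s) (hx : 0 ≤ x) (hy : 0 ≤ y)
    (hb : 0 < b) (hc : 0 < c) :
    (x + y) ^ s / (b + c) ^ (s - 1) ≤ x ^ s / b ^ (s - 1) + y ^ s / c ^ (s - 1) := by
  have hpersp := (convexOn_rpow hs).perspective_add_le hb hc
    (mem_Ici.2 (by positivity : 0 ≤ b⁻¹ • x)) (mem_Ici.2 (by positivity : 0 ≤ c⁻¹ • y))
  simp only [smul_eq_mul] at hpersp
  rwa [mul_inv_mul_rpow s (by positivity) (by positivity), mul_inv_mul_rpow s hb hx,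
    mul_inv_mul_rpow s hc hy] at hpersp

theorem rpow_sub_one_mul_add_rpow_div_le {s x y b c : ℝ} (hs : 1 ≤ s) (hx : 0 ≤ x)
    (hy : 0 ≤ y) (hb : 0 < b) (hc : 0 ≤ c) :
    c ^ (s - 1) * ((x + y) ^ s / (b + c) ^ (s - 1)) ≤
      c ^ (s - 1) * (x ^ s / b ^ (s - 1)) + y ^ s := by
  rcases hc.eq_or_lt with rfl | hc
  · rcases hs.eq_or_lt with rfl | hs
    · simp
    · rw [zero_rpow (by linarith)]
      simp only [zero_mul, zero_add]
      positivity
  · have hcs : 0 < c ^ (s - 1) := by positivity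
    calc c ^ (s - 1) * ((x + y) ^ s / (b + c) ^ (s - 1))
        ≤ c ^ (s - 1) * (x ^ s / b ^ (s - 1) + y ^ s / c ^ (s - 1)) := by
          gcongr; exact add_rpow_div_rpow_sub_one_le hs hx hy hb hc
      _ = c ^ (s - 1) * (x ^ s / b ^ (s - 1)) + y ^ s := by field_simp

theorem Lrad_sub {N : ℕ} {p : ℝ} {u v : ℝ → ℝ} {r : ℝ} (hu : ContDiffAt ℝ 2 u r)
    (hv : ContDiffAt ℝ 2 v r) :
    Lrad N p (fun s => u s - v s) r = Lrad N p u r - Lrad N p v r := by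
  have hd : deriv (fun s => u s - v s) =ᶠ[𝓝 r] fun s => deriv u s - deriv v s := by
    filter_upwards [hu.eventually (by simp), hv.eventually (by simp)] with s hus hvs
    exact deriv_sub (hus.differentiableAt (by norm_num)) (hvs.differentiableAt (by norm_num))
  have hdd : deriv (deriv (fun s => u s - v s)) r = deriv (deriv u) r - deriv (deriv v) r := by
    rw [hd.deriv_eq]
    exact deriv_sub ((hu.derivWithin (m := 1) (by norm_num)).differentiableAt (by norm_num))
      ((hv.derivWithin (m := 1) (by norm_num)).differentiableAt (by norm_num))
  simp only [Lrad, hd.eq_of_nhds, hdd]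
  ring

theorem superposition_pointwise {p V a b x y La Lb : ℝ} (hp : 2 ≤ p) (hV : 0 ≤ V) (hb : 0 < b)
    (hba : b ≤ a) (hy : 0 < y) (hyx : y ≤ x)
    (hsub : -(|a| ^ (p - 2) * La) - V * (|x| ^ (p - 2) * x) ≤ 0)
    (hsup : 0 ≤ -(|b| ^ (p - 2) * Lb) - V * (|y| ^ (p - 2) * y)) :
    -(|a - b| ^ (p - 2) * (La - Lb)) - V * (x - y) ^ (p - 1) ≤ 0 := by
  have ha : 0 < a := hb.trans_le hba
  have hx : 0 < x := hy.trans_le hyx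
  have habs_mul_self : ∀ z : ℝ, 0 < z → |z| ^ (p - 2) * z = z ^ (p - 1) := fun z hz => by
    rw [abs_of_pos hz, ← rpow_add_one hz.ne']
    ring_nf
  rw [abs_of_pos ha, habs_mul_self x hx] at hsub
  rw [abs_of_pos hb, habs_mul_self y hy] at hsup
  rw [abs_of_nonneg (sub_nonneg.2 hba)]
  have hLa : -(V * x ^ (p - 1)) / a ^ (p - 2) ≤ La := by
    rw [div_le_iff₀ (by positivity)]; linarith
  have hLb : Lb ≤ -(V * y ^ (p - 1)) / b ^ (p - 2) := by
    rw [le_div_iff₀ (by positivity)]; linarith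
  have hdiff : V * (y ^ (p - 1) / b ^ (p - 2) - x ^ (p - 1) / a ^ (p - 2)) ≤ La - Lb := by
    calc _ = -(V * x ^ (p - 1)) / a ^ (p - 2) - -(V * y ^ (p - 1)) / b ^ (p - 2) := by ring
      _ ≤ La - Lb := sub_le_sub hLa hLb
  have key := rpow_sub_one_mul_add_rpow_div_le (s := p - 1) (by linarith) hy.le
    (sub_nonneg.2 hyx) hb (sub_nonneg.2 hba)
  rw [add_sub_cancel, add_sub_cancel, show p - 1 - 1 = p - 2 by ring] at key
  have hcq : 0 ≤ (a - b) ^ (p - 2) := by positivity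
  nlinarith [mul_le_mul_of_nonneg_left hdiff hcq, mul_le_mul_of_nonneg_left key hV]

theorem superposition_increasing_general (N : ℕ) (p : ℝ) (hp : 2 ≤ p)
    (r₀ : ℝ) (R₀ : EReal)
    (V u v : ℝ → ℝ)
    (hV : ∀ r : ℝ, r₀ < r → (r : EReal) < R₀ → 0 ≤ V r)
    (hu : ContDiffOn ℝ 2 u {r : ℝ | r₀ < r ∧ (r : EReal) < R₀})
    (hv : ContDiffOn ℝ 2 v {r : ℝ | r₀ < r ∧ (r : EReal) < R₀})
    (hvu : ∀ r : ℝ, r₀ < r → (r : EReal) < R₀ → 0 < v r ∧ v r ≤ u r)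
    (hder : ∀ r : ℝ, r₀ < r → (r : EReal) < R₀ → deriv v r ≤ deriv u r ∧ 0 < deriv v r)
    (hsub : ∀ r : ℝ, r₀ < r → (r : EReal) < R₀ →
      -(|deriv u r| ^ (p - 2) * Lrad N p u r) - V r * (|u r| ^ (p - 2) * u r) ≤ 0)
    (hsup : ∀ r : ℝ, r₀ < r → (r : EReal) < R₀ →
      0 ≤ -(|deriv v r| ^ (p - 2) * Lrad N p v r) - V r * (|v r| ^ (p - 2) * v r)) :
    ∀ r : ℝ, r₀ < r → (r : EReal) < R₀ →
      -(|deriv u r - deriv v r| ^ (p - 2) * Lrad N p (fun s => u s - v s) r)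
        - V r * (u r - v r) ^ (p - 1) ≤ 0 := by
  intro r hr₀r hrR₀
  have hopen : IsOpen {r : ℝ | r₀ < r ∧ (r : EReal) < R₀} :=
    (isOpen_lt continuous_const continuous_id).inter
      (isOpen_Iio.preimage continuous_coe_real_ereal)
  have hnhds := hopen.mem_nhds ⟨hr₀r, hrR₀⟩
  rw [Lrad_sub (hu.contDiffAt hnhds) (hv.contDiffAt hnhds)]
  obtain ⟨hv_pos, hvu_r⟩ := hvu r hr₀r hrR₀
  obtain ⟨hder_le, hv'_pos⟩ := hder r hr₀r hrR₀
  exact superposition_pointwise hp (hV r hr₀r hrR₀) hv'_pos hder_le hv_pos hvu_r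
    (hsub r hr₀r hrR₀) (hsup r hr₀r hrR₀)

/-- Superposition principle, increasing case: if `u` is a radial subsolution and `v`
a radial supersolution of `-Δ_p u - V |u|^{p-2} u = 0` on `(r₀, R₀)`, with
`0 < v ≤ u` and `u' ≥ v' > 0`, `V ≥ 0`, `p ≥ 2`, then `u - v` is a radial subsolution. -/
theorem superposition_increasing (N : ℕ) (hN : 2 ≤ N) (p : ℝ) (hp : 2 ≤ p)
    (r₀ : ℝ) (R₀ : EReal) (hr₀ : 0 < r₀) (hR : (r₀ : EReal) < R₀)
    (V u v : ℝ → ℝ)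
    (hVcont : ContinuousOn V {r : ℝ | r₀ < r ∧ (r : EReal) < R₀})
    (hV : ∀ r : ℝ, r₀ < r → (r : EReal) < R₀ → 0 ≤ V r)
    (hu : ContDiffOn ℝ 2 u {r : ℝ | r₀ < r ∧ (r : EReal) < R₀})
    (hv : ContDiffOn ℝ 2 v {r : ℝ | r₀ < r ∧ (r : EReal) < R₀})
    (hvu : ∀ r : ℝ, r₀ < r → (r : EReal) < R₀ → 0 < v r ∧ v r ≤ u r)
    (hder : ∀ r : ℝ, r₀ < r → (r : EReal) < R₀ → deriv v r ≤ deriv u r ∧ 0 < deriv v r)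
    (hsub : ∀ r : ℝ, r₀ < r → (r : EReal) < R₀ →
      -(|deriv u r| ^ (p - 2) * Lrad N p u r) - V r * (|u r| ^ (p - 2) * u r) ≤ 0)
    (hsup : ∀ r : ℝ, r₀ < r → (r : EReal) < R₀ →
      0 ≤ -(|deriv v r| ^ (p - 2) * Lrad N p v r) - V r * (|v r| ^ (p - 2) * v r)) :
    ∀ r : ℝ, r₀ < r → (r : EReal) < R₀ →
      -(|deriv u r - deriv v r| ^ (p - 2) * Lrad N p (fun s => u s - v s) r)
        - V r * (u r - v r) ^ (p - 1) ≤ 0 :=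
  superposition_increasing_general N p hp r₀ R₀ V u v hV hu hv hvu hder hsub hsup
end

section
/- Let N ≥ 2, let p = 2, let V be continuous on the exterior region {x ∈ ℝ^N : |x| ≥ 1}, and assume condition (*) holds on {|x| > 1}. Let u ≥ 0 be continuous on {|x| ≥ 1}, C² on {|x| > 1}, and a subsolution of −Δu − Vu = 0 there (i.e. −Δu(x) − V(x)u(x) ≤ 0 for all |x| > 1). Assume there exists a positive function v, continuous on {|x| ≥ 1}, C² on {|x| > 1}, which is a supersolution (−Δv − Vv ≥ 0) and satisfies u(x)/v(x) → 0 as |x| → ∞. Then for every positive function w, continuous on {|x| ≥ 1}, C² on {|x| > 1}, which is a supersolution of −Δw − Vw = 0, there exists C > 0 such that u(x) ≤ C·w(x) for all |x| ≥ 1. -/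
/-!
Fix `C > 0` with `u ≤ C w` on the unit sphere. For `ε > 0`, `h = u - ε v - C w` is a subsolution
of `-Δh - Vh = 0` which is `≤ 0` on the unit sphere and, because `u / v → 0`, outside a large
ball; the weak maximum principle on annuli gives `h ≤ 0`, i.e. `u ≤ C w + ε v`, and `ε → 0`.

For the maximum principle, `w` is first made a strict supersolution: `W = w - δ e^{l⟪a, ·⟫}` with
`‖a‖ = 1`, `l ^ 2 > sup |V|` and `δ` small, since `Δ e^{l⟪a, ·⟫} = l ^ 2 e^{l⟪a, ·⟫}`. If `h` had a
positive value, `h / W` would attain a positive maximum `m` inside the annulus, so `h - m W` would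
have a local maximum `0` there; yet `-Δ(h - m W) - V (h - m W) < 0` at that point, which forces
`Δ(h - m W) > 0`.
-/

/-- The Laplacian of `u : ℝ^N → ℝ` written coordinatewise via `fderiv`. -/
noncomputable def lap (N : ℕ) (u : EuclideanSpace ℝ (Fin N) → ℝ)
    (x : EuclideanSpace ℝ (Fin N)) : ℝ :=
  ∑ i : Fin N, fderiv ℝ (fun y => fderiv ℝ u y (EuclideanSpace.single i 1)) x
    (EuclideanSpace.single i 1)

open Filter Topology Laplacian InnerProductSpace Metric Set

theorem IsCompact.exists_pos_forall_le_mul {X : Type*} [TopologicalSpace X] {K : Set X}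
    (hK : IsCompact K) {f g : X → ℝ} (hf : ContinuousOn f K) (hg : ContinuousOn g K)
    (hg_pos : ∀ x ∈ K, 0 < g x) : ∃ C > 0, ∀ x ∈ K, f x ≤ C * g x := by
  obtain ⟨B, hB⟩ := hK.exists_bound_of_continuousOn (hf.div hg fun x hx => (hg_pos x hx).ne')
  refine ⟨max B 1, by positivity, fun x hx => ?_⟩
  rw [← div_le_iff₀ (hg_pos x hx)]
  exact (le_abs_self _).trans <| (hB x hx).trans (le_max_left _ _)

theorem IsLocalMax.deriv_deriv_nonpos {f : ℝ → ℝ} {x : ℝ} (hf : ContinuousAt f x)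
    (hmax : IsLocalMax f x) : deriv (deriv f) x ≤ 0 := by
  by_contra! hpos
  have hmin : IsLocalMin f x := isLocalMin_of_deriv_deriv_pos hpos hmax.deriv_eq_zero hf
  have hconst : f =ᶠ[𝓝 x] fun _ => f x := by
    filter_upwards [hmin, hmax] with y hy₁ hy₂ using le_antisymm hy₂ hy₁
  rw [hconst.deriv.deriv_eq] at hpos
  simp at hpos

section

variable {E : Type*} [NormedAddCommGroup E]

theorem IsLocalMax.fderiv_fderiv_apply_nonpos [NormedSpace ℝ E] {f : E → ℝ} {x : E}
    (hf : ContDiffAt ℝ 2 f x) (hmax : IsLocalMax f x) (e : E) :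
    fderiv ℝ (fderiv ℝ f) x e e ≤ 0 := by
  set c : ℝ → E := fun t => x + t • e
  have hc : ∀ t, HasDerivAt c e t := fun t => by
    simpa [c] using ((hasDerivAt_id t).smul_const e).const_add x
  have hc0 : c 0 = x := by simp [c]
  rw [← hc0] at hf hmax ⊢
  have hderiv : deriv (f ∘ c) =ᶠ[𝓝 0] fun t => fderiv ℝ f (c t) e := by
    filter_upwards [(hc 0).continuousAt.eventually (hf.eventually (by simp))] with t ht
    exact ((ht.differentiableAt (by simp)).hasFDerivAt.comp_hasDerivAt t (hc t)).deriv
  have hderiv2 :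
      HasDerivAt (fun t => fderiv ℝ f (c t) e) (fderiv ℝ (fderiv ℝ f) (c 0) e e) 0 := by
    have hdf := (hf.fderiv_right (m := 1) le_rfl).differentiableAt one_ne_zero
    simpa using (hdf.hasFDerivAt.comp_hasDerivAt 0 (hc 0)).clm_apply (hasDerivAt_const 0 e)
  have := IsLocalMax.deriv_deriv_nonpos (hf.continuousAt.comp (hc 0).continuousAt)
    (hmax.comp_continuous (hc 0).continuousAt)
  rwa [hderiv.deriv_eq, hderiv2.deriv] at this

variable [InnerProductSpace ℝ E]

theorem hasFDerivAt_exp_mul_inner (a : E) (l : ℝ) (x : E) :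
    HasFDerivAt (fun y => Real.exp (l * ⟪a, y⟫_ℝ))
      ((l * Real.exp (l * ⟪a, x⟫_ℝ)) • innerSL ℝ a) x := by
  simpa [smul_smul, mul_comm] using (((innerSL ℝ a).hasFDerivAt (x := x)).const_mul l).exp

variable [FiniteDimensional ℝ E]

theorem IsLocalMax.laplacian_nonpos {f : E → ℝ} {x : E} (hf : ContDiffAt ℝ 2 f x)
    (hmax : IsLocalMax f x) : Δ f x ≤ 0 := by
  rw [laplacian_eq_iteratedFDeriv_stdOrthonormalBasis]
  exact Finset.sum_nonpos fun i _ => by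
    simpa [iteratedFDeriv_two_apply] using hmax.fderiv_fderiv_apply_nonpos hf _

theorem laplacian_exp_mul_inner (a : E) (l : ℝ) (x : E) :
    Δ (fun y => Real.exp (l * ⟪a, y⟫_ℝ)) x = l ^ 2 * ‖a‖ ^ 2 * Real.exp (l * ⟪a, x⟫_ℝ) := by
  have hfd : fderiv ℝ (fun y => Real.exp (l * ⟪a, y⟫_ℝ))
      = fun y => (l * Real.exp (l * ⟪a, y⟫_ℝ)) • innerSL ℝ a :=
    funext fun y => (hasFDerivAt_exp_mul_inner a l y).fderiv
  have hfd2 := ((hasFDerivAt_exp_mul_inner a l x).const_mul l).smul_const (innerSL ℝ a)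
  have hsum := (stdOrthonormalBasis ℝ E).sum_inner_mul_inner a a
  rw [real_inner_self_eq_norm_sq] at hsum
  rw [laplacian_eq_iteratedFDeriv_stdOrthonormalBasis]
  simp only [iteratedFDeriv_two_apply, hfd, hfd2.fderiv, ← hsum, Finset.mul_sum, Finset.sum_mul]
  refine Finset.sum_congr rfl fun i _ => ?_
  simp [real_inner_comm a]
  ring

noncomputable def schrodinger (V f : E → ℝ) (x : E) : ℝ := -Δ f x - V x * f x

theorem schrodinger_sub_smul {V f g : E → ℝ} {x : E} (hf : ContDiffAt ℝ 2 f x)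
    (hg : ContDiffAt ℝ 2 g x) (c : ℝ) :
    schrodinger V (f - c • g) x = schrodinger V f x - c * schrodinger V g x := by
  have hcg : ContDiffAt ℝ 2 (c • g) x := hg.const_smul c
  simp only [schrodinger, hf.laplacian_sub hcg, laplacian_smul c hg,
    Pi.sub_apply, Pi.smul_apply, smul_eq_mul]
  ring

def IsSubsolutionAt (V f : E → ℝ) (x : E) : Prop :=
  ContDiffAt ℝ 2 f x ∧ schrodinger V f x ≤ 0

def IsSupersolutionAt (V f : E → ℝ) (x : E) : Prop :=
  ContDiffAt ℝ 2 f x ∧ 0 ≤ schrodinger V f x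

theorem IsSubsolutionAt.sub_smul {V f g : E → ℝ} {x : E} (hf : IsSubsolutionAt V f x)
    (hg : IsSupersolutionAt V g x) {c : ℝ} (hc : 0 ≤ c) : IsSubsolutionAt V (f - c • g) x :=
  ⟨hf.1.sub (hg.1.const_smul c), by
    rw [schrodinger_sub_smul hf.1 hg.1]
    nlinarith [hf.2, hg.2]⟩

variable {K Ω : Set E} {V h w : E → ℝ}

theorem nonpos_on_of_strictSupersolution (hK : IsCompact K) (hΩ : IsOpen Ω) (hΩK : Ω ⊆ K)
    {W : E → ℝ} (hh : ContinuousOn h K) (hW : ContinuousOn W K) (hW_pos : ∀ x ∈ K, 0 < W x)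
    (hh_bdry : ∀ x ∈ K \ Ω, h x ≤ 0)
    (hh_sub : ∀ x ∈ Ω, IsSubsolutionAt V h x)
    (hW_super : ∀ x ∈ Ω, ContDiffAt ℝ 2 W x ∧ 0 < schrodinger V W x) :
    ∀ x ∈ K, h x ≤ 0 := by
  by_contra! ⟨y, hyK, hy⟩
  obtain ⟨x₀, hx₀K, hmax⟩ :=
    hK.exists_isMaxOn ⟨y, hyK⟩ (hh.div hW fun x hx => (hW_pos x hx).ne')
  set m := h x₀ / W x₀
  have hle : ∀ x ∈ K, h x ≤ m * W x := fun x hx => (div_le_iff₀ (hW_pos x hx)).1 (hmax hx)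
  have hm : 0 < m := (div_pos hy (hW_pos y hyK)).trans_le (hmax hyK)
  have hx₀Ω : x₀ ∈ Ω := by
    by_contra hx₀
    exact (div_nonpos_of_nonpos_of_nonneg (hh_bdry x₀ ⟨hx₀K, hx₀⟩) (hW_pos x₀ hx₀K).le).not_gt hm
  obtain ⟨hh₀, hLh⟩ := hh_sub x₀ hx₀Ω
  obtain ⟨hW₀, hLW⟩ := hW_super x₀ hx₀Ω
  have hzero : (h - m • W) x₀ = 0 := by
    simp [m, div_mul_cancel₀ _ (hW_pos x₀ hx₀K).ne']
  have hlocmax : IsLocalMax (h - m • W) x₀ := by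
    filter_upwards [hΩ.mem_nhds hx₀Ω] with x hx
    simpa [hzero] using hle x (hΩK hx)
  have hΔ : Δ (h - m • W) x₀ ≤ 0 := hlocmax.laplacian_nonpos (hh₀.sub (hW₀.const_smul m))
  have hL := schrodinger_sub_smul (V := V) hh₀ hW₀ m
  rw [schrodinger, hzero] at hL
  nlinarith

variable [Nontrivial E]

theorem exists_strictSupersolution (hK : IsCompact K) (hΩK : Ω ⊆ K) (hV : ContinuousOn V K)
    (hw : ContinuousOn w K) (hw_pos : ∀ x ∈ K, 0 < w x)
    (hw_super : ∀ x ∈ Ω, IsSupersolutionAt V w x) :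
    ∃ W : E → ℝ, ContinuousOn W K ∧ (∀ x ∈ K, 0 < W x) ∧
      ∀ x ∈ Ω, ContDiffAt ℝ 2 W x ∧ 0 < schrodinger V W x := by
  obtain ⟨a, ha⟩ := exists_norm_eq E zero_le_one
  obtain ⟨B, hB⟩ := hK.exists_bound_of_continuousOn hV
  set l := |B| + 1
  set φ : E → ℝ := fun y => Real.exp (l * ⟪a, y⟫_ℝ)
  have hφ : ContDiff ℝ 2 φ :=
    Real.contDiff_exp.comp (contDiff_const.mul (contDiff_const.inner ℝ contDiff_id))
  obtain ⟨C, hC, hφw⟩ := hK.exists_pos_forall_le_mul hφ.continuous.continuousOn hw hw_pos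
  set δ := (2 * C)⁻¹
  refine ⟨w - δ • φ, hw.sub (hφ.continuous.continuousOn.const_smul δ), fun x hx => ?_,
    fun x hx => ⟨(hw_super x hx).1.sub (hφ.contDiffAt.const_smul δ), ?_⟩⟩
  · have hδφ : δ * φ x ≤ w x / 2 := by
      rw [inv_mul_le_iff₀ (by positivity)]
      linarith [hφw x hx]
    simp only [Pi.sub_apply, Pi.smul_apply, smul_eq_mul]
    linarith [hw_pos x hx]
  · have hLφ : schrodinger V φ x = -(l ^ 2 + V x) * φ x := by
      simp only [schrodinger, φ, laplacian_exp_mul_inner, ha]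
      ring
    have hVx : -V x ≤ |B| := (neg_le_abs _).trans ((hB x (hΩK hx)).trans (le_abs_self B))
    have hl : 0 < l ^ 2 + V x := by nlinarith [abs_nonneg B]
    have := mul_pos (inv_pos.2 (mul_pos two_pos hC)) (mul_pos hl (Real.exp_pos (l * ⟪a, x⟫_ℝ)))
    rw [schrodinger_sub_smul (hw_super x hx).1 hφ.contDiffAt, hLφ]
    linarith [(hw_super x hx).2]

theorem nonpos_on_of_supersolution (hK : IsCompact K) (hΩ : IsOpen Ω) (hΩK : Ω ⊆ K)
    (hV : ContinuousOn V K) (hh : ContinuousOn h K) (hw : ContinuousOn w K)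
    (hw_pos : ∀ x ∈ K, 0 < w x) (hh_bdry : ∀ x ∈ K \ Ω, h x ≤ 0)
    (hh_sub : ∀ x ∈ Ω, IsSubsolutionAt V h x)
    (hw_super : ∀ x ∈ Ω, IsSupersolutionAt V w x) :
    ∀ x ∈ K, h x ≤ 0 :=
  have ⟨_, hW, hW_pos, hW_super⟩ := exists_strictSupersolution hK hΩK hV hw hw_pos hw_super
  nonpos_on_of_strictSupersolution hK hΩ hΩK hh hW hW_pos hh_bdry hh_sub hW_super

theorem nonpos_of_norm_ge_of_supersolution {r : ℝ} (hV : ContinuousOn V {x | r ≤ ‖x‖})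
    (hh : ContinuousOn h {x | r ≤ ‖x‖}) (hw : ContinuousOn w {x | r ≤ ‖x‖})
    (hw_pos : ∀ x, r ≤ ‖x‖ → 0 < w x)
    (hh_sub : ∀ x, r < ‖x‖ → IsSubsolutionAt V h x)
    (hw_super : ∀ x, r < ‖x‖ → IsSupersolutionAt V w x)
    (hh_sphere : ∀ x, ‖x‖ = r → h x ≤ 0) (hh_far : ∃ R, ∀ x, R ≤ ‖x‖ → h x ≤ 0)
    {x : E} (hx : r ≤ ‖x‖) : h x ≤ 0 := by
  obtain ⟨R, hR⟩ := hh_far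
  set ρ := max R ‖x‖
  have hK : closedBall (0 : E) ρ \ ball 0 r ⊆ {y | r ≤ ‖y‖} := fun y hy => by simpa using hy.2
  have hΩ : ∀ y ∈ ball (0 : E) ρ \ closedBall 0 r, r < ‖y‖ := fun y hy => by simpa using hy.2
  refine nonpos_on_of_supersolution ((isCompact_closedBall 0 ρ).diff isOpen_ball)
    (isOpen_ball.sdiff isClosed_closedBall)
    (sdiff_subset_sdiff ball_subset_closedBall ball_subset_closedBall)
    (hV.mono hK) (hh.mono hK) (hw.mono hK) (fun y hy => hw_pos y (hK hy)) (fun y hy => ?_)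
    (fun y hy => hh_sub y (hΩ y hy)) (fun y hy => hw_super y (hΩ y hy)) x
    ⟨by simp [ρ], by simpa using hx⟩
  obtain ⟨⟨hyρ, hyr⟩, hy⟩ := hy
  rw [mem_closedBall_zero_iff] at hyρ
  rw [mem_ball_zero_iff, not_lt] at hyr
  rcases hyρ.lt_or_eq with hlt | heq
  · refine hh_sphere y (le_antisymm ?_ hyr)
    by_contra! hr
    exact hy ⟨mem_ball_zero_iff.2 hlt, fun hy' => (mem_closedBall_zero_iff.1 hy').not_gt hr⟩
  · exact hR y (heq ▸ le_max_left R ‖x‖)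

theorem le_mul_of_le_mul_on_sphere {r C : ℝ} {u v : E → ℝ} (hC : 0 ≤ C)
    (hV : ContinuousOn V {x | r ≤ ‖x‖}) (hu : ContinuousOn u {x | r ≤ ‖x‖})
    (hv : ContinuousOn v {x | r ≤ ‖x‖}) (hw : ContinuousOn w {x | r ≤ ‖x‖})
    (hv_pos : ∀ x, r ≤ ‖x‖ → 0 < v x) (hw_pos : ∀ x, r ≤ ‖x‖ → 0 < w x)
    (hu_sub : ∀ x, r < ‖x‖ → IsSubsolutionAt V u x)
    (hv_super : ∀ x, r < ‖x‖ → IsSupersolutionAt V v x)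
    (hw_super : ∀ x, r < ‖x‖ → IsSupersolutionAt V w x)
    (hv_small : ∀ ε : ℝ, 0 < ε → ∃ R : ℝ, ∀ x, R ≤ ‖x‖ → u x / v x < ε)
    (huw : ∀ x, ‖x‖ = r → u x ≤ C * w x) {x : E} (hx : r ≤ ‖x‖) : u x ≤ C * w x := by
  refine le_of_forall_pos_le_add fun η hη => ?_
  set ε := η / v x
  have hε : 0 < ε := div_pos hη (hv_pos x hx)
  obtain ⟨R, hR⟩ := hv_small ε hε
  have key := nonpos_of_norm_ge_of_supersolution (h := u - ε • v - C • w) hV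
    ((hu.sub (hv.const_smul ε)).sub (hw.const_smul C)) hw hw_pos
    (fun y hy => ((hu_sub y hy).sub_smul (hv_super y hy) hε.le).sub_smul (hw_super y hy) hC)
    hw_super (fun y hy => ?_) ⟨max R r, fun y hy => ?_⟩ hx
  · simp only [Pi.sub_apply, Pi.smul_apply, smul_eq_mul] at key
    rw [div_mul_cancel₀ _ (hv_pos x hx).ne'] at key
    linarith
  all_goals simp only [Pi.sub_apply, Pi.smul_apply, smul_eq_mul]
  · nlinarith [huw y hy, hv_pos y hy.ge]
  · have hyr : r ≤ ‖y‖ := (le_max_right _ _).trans hy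
    have := (div_lt_iff₀ (hv_pos y hyr)).1 (hR y ((le_max_left _ _).trans hy))
    nlinarith [hw_pos y hyr]

end

theorem lap_eq_laplacian {N : ℕ} {f : EuclideanSpace ℝ (Fin N) → ℝ}
    {x : EuclideanSpace ℝ (Fin N)} (hf : ContDiffAt ℝ 2 f x) : lap N f x = Δ f x := by
  have hdf := (hf.fderiv_right (m := 1) le_rfl).differentiableAt one_ne_zero
  rw [laplacian_eq_iteratedFDeriv_orthonormalBasis f (EuclideanSpace.basisFun (Fin N) ℝ)]
  refine Finset.sum_congr rfl fun i _ => ?_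
  rw [iteratedFDeriv_two_apply, fderiv_clm_apply hdf (differentiableAt_const _)]
  simp

section

variable {N : ℕ} {U : Set (EuclideanSpace ℝ (Fin N))} {V f : EuclideanSpace ℝ (Fin N) → ℝ}

theorem schrodinger_eq_neg_lap_sub {x : EuclideanSpace ℝ (Fin N)} (hf : ContDiffAt ℝ 2 f x) :
    schrodinger V f x = -lap N f x - V x * f x := by
  rw [schrodinger, lap_eq_laplacian hf]

theorem isSubsolutionAt_of_lap (hU : IsOpen U) (hf : ContDiffOn ℝ 2 f U)
    (hsub : ∀ x ∈ U, -lap N f x - V x * f x ≤ 0) : ∀ x ∈ U, IsSubsolutionAt V f x :=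
  fun x hx => have hfx := hf.contDiffAt (hU.mem_nhds hx)
    ⟨hfx, (schrodinger_eq_neg_lap_sub hfx).symm ▸ hsub x hx⟩

theorem isSupersolutionAt_of_lap (hU : IsOpen U) (hf : ContDiffOn ℝ 2 f U)
    (hsuper : ∀ x ∈ U, 0 ≤ -lap N f x - V x * f x) : ∀ x ∈ U, IsSupersolutionAt V f x :=
  fun x hx => have hfx := hf.contDiffAt (hU.mem_nhds hx)
    ⟨hfx, (schrodinger_eq_neg_lap_sub hfx).symm ▸ hsuper x hx⟩

end

theorem small_subsolution_dominated_p_eq_two_general (N : ℕ)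
    (V u : EuclideanSpace ℝ (Fin N) → ℝ)
    (hVcont : ContinuousOn V {x : EuclideanSpace ℝ (Fin N) | 1 ≤ ‖x‖})
    (hucont : ContinuousOn u {x : EuclideanSpace ℝ (Fin N) | 1 ≤ ‖x‖})
    (huC2 : ContDiffOn ℝ 2 u {x : EuclideanSpace ℝ (Fin N) | 1 < ‖x‖})
    (husub : ∀ x : EuclideanSpace ℝ (Fin N), 1 < ‖x‖ → -lap N u x - V x * u x ≤ 0)
    (hv : ∃ v : EuclideanSpace ℝ (Fin N) → ℝ,
      ContinuousOn v {x : EuclideanSpace ℝ (Fin N) | 1 ≤ ‖x‖} ∧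
      ContDiffOn ℝ 2 v {x : EuclideanSpace ℝ (Fin N) | 1 < ‖x‖} ∧
      (∀ x : EuclideanSpace ℝ (Fin N), 1 ≤ ‖x‖ → 0 < v x) ∧
      (∀ x : EuclideanSpace ℝ (Fin N), 1 < ‖x‖ → 0 ≤ -lap N v x - V x * v x) ∧
      (∀ ε : ℝ, 0 < ε → ∃ R : ℝ, ∀ x : EuclideanSpace ℝ (Fin N),
        R ≤ ‖x‖ → u x / v x < ε)) :
    ∀ w : EuclideanSpace ℝ (Fin N) → ℝ,
      ContinuousOn w {x : EuclideanSpace ℝ (Fin N) | 1 ≤ ‖x‖} →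
      ContDiffOn ℝ 2 w {x : EuclideanSpace ℝ (Fin N) | 1 < ‖x‖} →
      (∀ x : EuclideanSpace ℝ (Fin N), 1 ≤ ‖x‖ → 0 < w x) →
      (∀ x : EuclideanSpace ℝ (Fin N), 1 < ‖x‖ → 0 ≤ -lap N w x - V x * w x) →
      ∃ C : ℝ, 0 < C ∧ ∀ x : EuclideanSpace ℝ (Fin N), 1 ≤ ‖x‖ → u x ≤ C * w x := by
  obtain ⟨v, hv_cont, hv_C2, hv_pos, hv_lap, hv_small⟩ := hv
  intro w hw_cont hw_C2 hw_pos hw_lap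
  have hU : IsOpen {x : EuclideanSpace ℝ (Fin N) | 1 < ‖x‖} :=
    isOpen_lt continuous_const continuous_norm
  have hsphere : sphere (0 : EuclideanSpace ℝ (Fin N)) 1 ⊆ {x | 1 ≤ ‖x‖} :=
    fun x hx => (mem_sphere_zero_iff_norm.1 hx).ge
  obtain ⟨C, hC, huw⟩ := (isCompact_sphere _ _).exists_pos_forall_le_mul (hucont.mono hsphere)
    (hw_cont.mono hsphere) fun x hx => hw_pos x (hsphere hx)
  refine ⟨C, hC, fun x hx => ?_⟩
  have : Nontrivial (EuclideanSpace ℝ (Fin N)) :=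
    nontrivial_of_ne x 0 (norm_pos_iff.1 (one_pos.trans_le hx))
  exact le_mul_of_le_mul_on_sphere hC.le hVcont hucont hv_cont hw_cont hv_pos hw_pos
    (isSubsolutionAt_of_lap hU huC2 husub) (isSupersolutionAt_of_lap hU hv_C2 hv_lap)
    (isSupersolutionAt_of_lap hU hw_C2 hw_lap) hv_small
    (fun y hy => huw y (mem_sphere_zero_iff_norm.2 hy)) hx

/-- If a nonnegative subsolution `u` of `-Δu - Vu = 0` on the exterior of the unit ball
is smaller than some positive supersolution `v` (i.e. `u/v → 0` at infinity), and
condition (*) holds, then `u` is dominated by every positive supersolution `w`. -/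
theorem small_subsolution_dominated_p_eq_two (N : ℕ) (hN : 2 ≤ N)
    (V u : EuclideanSpace ℝ (Fin N) → ℝ)
    (hVcont : ContinuousOn V {x : EuclideanSpace ℝ (Fin N) | 1 ≤ ‖x‖})
    (hstar : ∃ φ : EuclideanSpace ℝ (Fin N) → ℝ,
      ContDiffOn ℝ 2 φ {x : EuclideanSpace ℝ (Fin N) | 1 < ‖x‖} ∧
      (∀ x : EuclideanSpace ℝ (Fin N), 1 < ‖x‖ → 0 < φ x) ∧
      (∀ x : EuclideanSpace ℝ (Fin N), 1 < ‖x‖ → 0 ≤ -lap N φ x - V x * φ x) ∧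
      (∃ x : EuclideanSpace ℝ (Fin N), 1 < ‖x‖ ∧ -lap N φ x - V x * φ x ≠ 0))
    (hu0 : ∀ x : EuclideanSpace ℝ (Fin N), 1 ≤ ‖x‖ → 0 ≤ u x)
    (hucont : ContinuousOn u {x : EuclideanSpace ℝ (Fin N) | 1 ≤ ‖x‖})
    (huC2 : ContDiffOn ℝ 2 u {x : EuclideanSpace ℝ (Fin N) | 1 < ‖x‖})
    (husub : ∀ x : EuclideanSpace ℝ (Fin N), 1 < ‖x‖ → -lap N u x - V x * u x ≤ 0)
    (hv : ∃ v : EuclideanSpace ℝ (Fin N) → ℝ,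
      ContinuousOn v {x : EuclideanSpace ℝ (Fin N) | 1 ≤ ‖x‖} ∧
      ContDiffOn ℝ 2 v {x : EuclideanSpace ℝ (Fin N) | 1 < ‖x‖} ∧
      (∀ x : EuclideanSpace ℝ (Fin N), 1 ≤ ‖x‖ → 0 < v x) ∧
      (∀ x : EuclideanSpace ℝ (Fin N), 1 < ‖x‖ → 0 ≤ -lap N v x - V x * v x) ∧
      (∀ ε : ℝ, 0 < ε → ∃ R : ℝ, ∀ x : EuclideanSpace ℝ (Fin N),
        R ≤ ‖x‖ → u x / v x < ε)) :
    ∀ w : EuclideanSpace ℝ (Fin N) → ℝ,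
      ContinuousOn w {x : EuclideanSpace ℝ (Fin N) | 1 ≤ ‖x‖} →
      ContDiffOn ℝ 2 w {x : EuclideanSpace ℝ (Fin N) | 1 < ‖x‖} →
      (∀ x : EuclideanSpace ℝ (Fin N), 1 ≤ ‖x‖ → 0 < w x) →
      (∀ x : EuclideanSpace ℝ (Fin N), 1 < ‖x‖ → 0 ≤ -lap N w x - V x * w x) →
      ∃ C : ℝ, 0 < C ∧ ∀ x : EuclideanSpace ℝ (Fin N), 1 ≤ ‖x‖ → u x ≤ C * w x :=
  small_subsolution_dominated_p_eq_two_general N V u hVcont hucont huC2 husub hv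
end

section
/- (Phragmén–Lindelöf alternative for p = 2.) Let N ≥ 2, let p = 2, let V be continuous on {x ∈ ℝ^N : |x| ≥ 1}, assume condition (*) holds on {|x| > 1}, and let u ≥ 0 be continuous on {|x| ≥ 1}, C² on {|x| > 1}, and a subsolution of −Δu − Vu = 0 on {|x| > 1}. Then either (i) for every positive function w, continuous on {|x| ≥ 1}, C² on {|x| > 1}, with −Δw − Vw ≥ 0, there exists C > 0 with u ≤ C·w on {|x| ≥ 1}; or (ii) for every such positive supersolution w, limsup_{|x|→∞} u(x)/w(x) > 0 (i.e. u(x)/w(x) does not tend to 0 as |x| → ∞). -/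
open Filter Topology

namespace PLaux

variable {N : ℕ}

/-- Second directional derivative. -/
noncomputable def D2 (f : EuclideanSpace ℝ (Fin N) → ℝ) (x e : EuclideanSpace ℝ (Fin N)) : ℝ :=
  fderiv ℝ (fun y => fderiv ℝ f y e) x e

theorem lap_eq_sum (f : EuclideanSpace ℝ (Fin N) → ℝ) (x : EuclideanSpace ℝ (Fin N)) :
    lap N f x = ∑ i : Fin N, D2 f x (EuclideanSpace.single i 1) := rfl

theorem D2_congr {f g : EuclideanSpace ℝ (Fin N) → ℝ} {x e : EuclideanSpace ℝ (Fin N)}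
    (h : f =ᶠ[𝓝 x] g) : D2 f x e = D2 g x e := by
  unfold D2
  have h1 : (fun y => fderiv ℝ f y e) =ᶠ[𝓝 x] (fun y => fderiv ℝ g y e) := by
    filter_upwards [Filter.EventuallyEq.fderiv (𝕜 := ℝ) h] with y hy; rw [hy]
  rw [h1.fderiv_eq]

theorem D2_const {x e : EuclideanSpace ℝ (Fin N)} (c : ℝ) :
    D2 (fun _ => c) x e = 0 := by
  unfold D2
  have h1 : (fun y : EuclideanSpace ℝ (Fin N) => fderiv ℝ (fun _ : EuclideanSpace ℝ (Fin N) => c) y e)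
      = fun _ : EuclideanSpace ℝ (Fin N) => (0:ℝ) := by
    funext y
    simp
  rw [h1]
  simp

theorem lap_const {x : EuclideanSpace ℝ (Fin N)} (c : ℝ) :
    lap N (fun _ => c) x = 0 := by
  rw [lap_eq_sum]
  simp [D2_const]

theorem diff_fderiv_apply {f : EuclideanSpace ℝ (Fin N) → ℝ} {x : EuclideanSpace ℝ (Fin N)}
    (hf : ContDiffAt ℝ 2 f x) (e : EuclideanSpace ℝ (Fin N)) :
    DifferentiableAt ℝ (fun y => fderiv ℝ f y e) x := by
  have h1 : ContDiffAt ℝ 1 (fderiv ℝ f) x := hf.fderiv_right (by norm_num)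
  have h2 := h1.differentiableAt (by norm_num)
  exact (ContinuousLinearMap.apply ℝ ℝ e).differentiableAt.comp x h2

theorem ev_contDiffAt {f : EuclideanSpace ℝ (Fin N) → ℝ} {x : EuclideanSpace ℝ (Fin N)}
    (hf : ContDiffAt ℝ 2 f x) : ∀ᶠ y in 𝓝 x, ContDiffAt ℝ 2 f y :=
  hf.eventually (by norm_num)

theorem D2_add {f g : EuclideanSpace ℝ (Fin N) → ℝ} {x e : EuclideanSpace ℝ (Fin N)}
    (hf : ContDiffAt ℝ 2 f x) (hg : ContDiffAt ℝ 2 g x) :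
    D2 (fun y => f y + g y) x e = D2 f x e + D2 g x e := by
  have hev : (fun y => fderiv ℝ (fun z => f z + g z) y e)
      =ᶠ[𝓝 x] (fun y => fderiv ℝ f y e + fderiv ℝ g y e) := by
    filter_upwards [ev_contDiffAt hf, ev_contDiffAt hg] with y hfy hgy
    rw [fderiv_fun_add (hfy.differentiableAt (by norm_num)) (hgy.differentiableAt (by norm_num))]
    rfl
  unfold D2
  rw [hev.fderiv_eq, fderiv_fun_add (diff_fderiv_apply hf e) (diff_fderiv_apply hg e)]
  rfl

theorem D2_const_mul {f : EuclideanSpace ℝ (Fin N) → ℝ} {x e : EuclideanSpace ℝ (Fin N)}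
    (hf : ContDiffAt ℝ 2 f x) (c : ℝ) :
    D2 (fun y => c * f y) x e = c * D2 f x e := by
  have hev : (fun y => fderiv ℝ (fun z => c * f z) y e)
      =ᶠ[𝓝 x] (fun y => c * fderiv ℝ f y e) := by
    filter_upwards [ev_contDiffAt hf] with y hfy
    rw [fderiv_const_mul (hfy.differentiableAt (by norm_num)) c]
    rfl
  unfold D2
  rw [hev.fderiv_eq, fderiv_const_mul (diff_fderiv_apply hf e) c]
  rfl

theorem D2_neg {f : EuclideanSpace ℝ (Fin N) → ℝ} {x e : EuclideanSpace ℝ (Fin N)}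
    (hf : ContDiffAt ℝ 2 f x) :
    D2 (fun y => -(f y)) x e = -(D2 f x e) := by
  have := D2_const_mul hf (x := x) (e := e) (-1); simp only [neg_one_mul] at this
  simpa using this

theorem D2_sub {f g : EuclideanSpace ℝ (Fin N) → ℝ} {x e : EuclideanSpace ℝ (Fin N)}
    (hf : ContDiffAt ℝ 2 f x) (hg : ContDiffAt ℝ 2 g x) :
    D2 (fun y => f y - g y) x e = D2 f x e - D2 g x e := by
  have h1 : ContDiffAt ℝ 2 (fun y => -(g y)) x := hg.neg
  have := D2_add hf h1 (e := e)
  simp only [← sub_eq_add_neg] at this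
  rw [this, D2_neg hg, sub_eq_add_neg]

theorem D2_mul {f g : EuclideanSpace ℝ (Fin N) → ℝ} {x e : EuclideanSpace ℝ (Fin N)}
    (hf : ContDiffAt ℝ 2 f x) (hg : ContDiffAt ℝ 2 g x) :
    D2 (fun y => f y * g y) x e = f x * D2 g x e + g x * D2 f x e
      + 2 * fderiv ℝ f x e * fderiv ℝ g x e := by
  have hev : (fun y => fderiv ℝ (fun z => f z * g z) y e)
      =ᶠ[𝓝 x] (fun y => f y * fderiv ℝ g y e + g y * fderiv ℝ f y e) := by
    filter_upwards [ev_contDiffAt hf, ev_contDiffAt hg] with y hfy hgy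
    rw [fderiv_fun_mul (hfy.differentiableAt (by norm_num)) (hgy.differentiableAt (by norm_num))]
    simp only [ContinuousLinearMap.add_apply, ContinuousLinearMap.smul_apply, smul_eq_mul]
  unfold D2
  rw [hev.fderiv_eq]
  rw [fderiv_fun_add (by exact (hf.differentiableAt (by norm_num)).mul (diff_fderiv_apply hg e))
      (by exact (hg.differentiableAt (by norm_num)).mul (diff_fderiv_apply hf e))]
  rw [ContinuousLinearMap.add_apply]
  rw [fderiv_fun_mul (hf.differentiableAt (by norm_num)) (diff_fderiv_apply hg e)]
  rw [fderiv_fun_mul (hg.differentiableAt (by norm_num)) (diff_fderiv_apply hf e)]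
  simp only [ContinuousLinearMap.add_apply, ContinuousLinearMap.smul_apply, smul_eq_mul]
  ring

theorem D2_nonpos_of_isLocalMax {F : EuclideanSpace ℝ (Fin N) → ℝ} {z : EuclideanSpace ℝ (Fin N)}
    (hF : ContDiffAt ℝ 2 F z) (hmax : IsLocalMax F z) (e : EuclideanSpace ℝ (Fin N)) :
    D2 F z e ≤ 0 := by
  by_contra hpos
  push_neg at hpos
  set line : ℝ → EuclideanSpace ℝ (Fin N) := fun t => z + t • e with hlinedef
  have hline0 : line 0 = z := by simp [hlinedef]
  have hlinecont : Continuous line := continuous_const.add (continuous_id.smul continuous_const)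
  have htend : Filter.Tendsto line (𝓝 0) (𝓝 z) := by
    rw [← hline0]; exact hlinecont.tendsto 0
  set g : ℝ → ℝ := fun t => F (line t) with hgdef
  have hgmax : IsLocalMax g 0 := by
    filter_upwards [htend.eventually hmax] with t ht
    simpa [hgdef, hline0] using ht
  have hlinederiv : ∀ t : ℝ, HasDerivAt line e t := fun t => by
    have h := ((hasDerivAt_id t).smul_const e).const_add z
    rw [one_smul] at h
    exact h
  have hevF : ∀ᶠ t in 𝓝 (0:ℝ), ContDiffAt ℝ 2 F (line t) := htend.eventually (ev_contDiffAt hF)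
  have hgd : ∀ᶠ t in 𝓝 (0:ℝ), HasDerivAt g (fderiv ℝ F (line t) e) t := by
    filter_upwards [hevF] with t ht
    exact ((ht.differentiableAt (by norm_num)).hasFDerivAt).comp_hasDerivAt t (hlinederiv t)
  have hderiv_eq : deriv g =ᶠ[𝓝 (0:ℝ)] fun t => fderiv ℝ F (line t) e := by
    filter_upwards [hgd] with t ht; exact ht.deriv
  have hGdiff : DifferentiableAt ℝ (fun y => fderiv ℝ F y e) z := diff_fderiv_apply hF e
  have hG2 : HasDerivAt (fun t => fderiv ℝ F (line t) e) (D2 F z e) 0 := by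
    have h1 : HasFDerivAt (fun y => fderiv ℝ F y e)
        (fderiv ℝ (fun y => fderiv ℝ F y e) z) (line 0) := by
      rw [hline0]; exact hGdiff.hasFDerivAt
    have h2 := h1.comp_hasDerivAt 0 (hlinederiv 0)
    exact h2
  have hDg : HasDerivAt (deriv g) (D2 F z e) 0 := hG2.congr_of_eventuallyEq hderiv_eq
  have hdg0 : deriv g 0 = 0 := by
    have h0 : deriv g 0 = fderiv ℝ F (line 0) e := hgd.self_of_nhds.deriv
    rw [h0, hline0, hmax.fderiv_eq_zero]
    rfl
  have hslope : Filter.Tendsto (fun t => deriv g t / t) (𝓝[≠] (0:ℝ)) (𝓝 (D2 F z e)) := by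
    have h1 := hasDerivAt_iff_tendsto_slope.mp hDg
    refine h1.congr fun t => ?_
    simp [slope, hdg0, div_eq_inv_mul]
  have hposev : ∀ᶠ t in 𝓝[≠] (0:ℝ), 0 < deriv g t / t :=
    hslope.eventually (eventually_gt_nhds hpos)
  have hall : ∀ᶠ t in 𝓝[≠] (0:ℝ),
      0 < deriv g t / t ∧ (HasDerivAt g (fderiv ℝ F (line t) e) t ∧ g t ≤ g 0) :=
    hposev.and (eventually_nhdsWithin_of_eventually_nhds (hgd.and hgmax))
  rw [eventually_nhdsWithin_iff] at hall
  rw [Metric.eventually_nhds_iff] at hall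
  obtain ⟨δ, hδ, hball⟩ := hall
  have hb : 0 < δ/2 := by linarith
  have hmem : ∀ t : ℝ, 0 < t → t ≤ δ/2 →
      0 < deriv g t / t ∧ HasDerivAt g (fderiv ℝ F (line t) e) t ∧ g t ≤ g 0 := by
    intro t ht1 ht2
    have hd : dist t 0 < δ := by
      rw [Real.dist_eq, sub_zero, abs_of_pos ht1]; linarith
    exact hball hd (by simpa using ht1.ne')
  have hcont : ContinuousOn g (Set.Icc 0 (δ/2)) := by
    intro t ht
    rcases eq_or_lt_of_le ht.1 with h0 | h0
    · have := hgd.self_of_nhds.differentiableAt.continuousAt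
      rw [← h0]; exact this.continuousWithinAt
    · exact ((hmem t h0 ht.2).2.1.differentiableAt.continuousAt).continuousWithinAt
  have hpos' : ∀ t ∈ interior (Set.Icc (0:ℝ) (δ/2)), 0 < deriv g t := by
    rw [interior_Icc]
    intro t ht
    obtain ⟨h1, h2, _⟩ := hmem t ht.1 ht.2.le
    have := mul_pos ht.1 h1
    rwa [mul_div_cancel₀ _ (ne_of_gt ht.1)] at this
  have hmono := strictMonoOn_of_deriv_pos (convex_Icc 0 (δ/2)) hcont hpos'
  have h1 : g 0 < g (δ/2) := hmono ⟨le_rfl, hb.le⟩ ⟨hb.le, le_rfl⟩ hb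
  have h2 : g (δ/2) ≤ g 0 := (hmem (δ/2) hb le_rfl).2.2
  exact absurd h1 (not_lt.mpr h2)

theorem lap_nonpos_of_isLocalMax {F : EuclideanSpace ℝ (Fin N) → ℝ} {z : EuclideanSpace ℝ (Fin N)}
    (hF : ContDiffAt ℝ 2 F z) (hmax : IsLocalMax F z) : lap N F z ≤ 0 := by
  rw [lap_eq_sum]
  exact Finset.sum_nonpos fun i _ => D2_nonpos_of_isLocalMax hF hmax _

theorem lap_sub {f g : EuclideanSpace ℝ (Fin N) → ℝ} {x : EuclideanSpace ℝ (Fin N)}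
    (hf : ContDiffAt ℝ 2 f x) (hg : ContDiffAt ℝ 2 g x) :
    lap N (fun y => f y - g y) x = lap N f x - lap N g x := by
  rw [lap_eq_sum, lap_eq_sum, lap_eq_sum, ← Finset.sum_sub_distrib]
  exact Finset.sum_congr rfl fun i _ => D2_sub hf hg

theorem lap_const_mul {f : EuclideanSpace ℝ (Fin N) → ℝ} {x : EuclideanSpace ℝ (Fin N)}
    (hf : ContDiffAt ℝ 2 f x) (c : ℝ) :
    lap N (fun y => c * f y) x = c * lap N f x := by
  rw [lap_eq_sum, lap_eq_sum, Finset.mul_sum]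
  exact Finset.sum_congr rfl fun i _ => D2_const_mul hf c

theorem lap_mul {f g : EuclideanSpace ℝ (Fin N) → ℝ} {x : EuclideanSpace ℝ (Fin N)}
    (hf : ContDiffAt ℝ 2 f x) (hg : ContDiffAt ℝ 2 g x) :
    lap N (fun y => f y * g y) x = f x * lap N g x + g x * lap N f x
      + 2 * ∑ i : Fin N, fderiv ℝ f x (EuclideanSpace.single i 1)
          * fderiv ℝ g x (EuclideanSpace.single i 1) := by
  rw [lap_eq_sum, lap_eq_sum, lap_eq_sum]
  rw [Finset.sum_congr rfl fun i _ => D2_mul (e := EuclideanSpace.single i 1) hf hg]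
  rw [Finset.sum_add_distrib, Finset.sum_add_distrib, ← Finset.mul_sum, ← Finset.mul_sum]
  congr 1
  rw [Finset.mul_sum]
  exact Finset.sum_congr rfl fun i _ => by ring

theorem psi_contDiff (l : ℝ) (i0 : Fin N) :
    ContDiff ℝ 2 (fun x : EuclideanSpace ℝ (Fin N) => Real.exp (l * x i0)) :=
  (Real.contDiff_exp.of_le le_top).comp
    (contDiff_const.mul (EuclideanSpace.proj i0 : EuclideanSpace ℝ (Fin N) →L[ℝ] ℝ).contDiff)

theorem psi_hasFDerivAt (l : ℝ) (i0 : Fin N) (x : EuclideanSpace ℝ (Fin N)) :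
    HasFDerivAt (fun y : EuclideanSpace ℝ (Fin N) => Real.exp (l * y i0))
      ((l * Real.exp (l * x i0)) •
        (EuclideanSpace.proj i0 : EuclideanSpace ℝ (Fin N) →L[ℝ] ℝ)) x := by
  have h1 : HasFDerivAt (fun y : EuclideanSpace ℝ (Fin N) => l * y i0)
      (l • (EuclideanSpace.proj i0 : EuclideanSpace ℝ (Fin N) →L[ℝ] ℝ)) x := by
    have h0 : HasFDerivAt (fun y : EuclideanSpace ℝ (Fin N) => (EuclideanSpace.proj i0) y)
        (EuclideanSpace.proj i0 : EuclideanSpace ℝ (Fin N) →L[ℝ] ℝ) x :=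
      (EuclideanSpace.proj i0 : EuclideanSpace ℝ (Fin N) →L[ℝ] ℝ).hasFDerivAt
    exact h0.const_mul l
  have h2 := (Real.hasDerivAt_exp (l * x i0)).comp_hasFDerivAt x h1
  have e : (l * Real.exp (l * x i0)) • (EuclideanSpace.proj i0 : EuclideanSpace ℝ (Fin N) →L[ℝ] ℝ)
      = Real.exp (l * x i0) • l • (EuclideanSpace.proj i0 : EuclideanSpace ℝ (Fin N) →L[ℝ] ℝ) := by
    rw [smul_smul, mul_comm]
  rw [e]; exact h2

theorem fderiv_psi (l : ℝ) (i0 : Fin N) (x e : EuclideanSpace ℝ (Fin N)) :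
    fderiv ℝ (fun y : EuclideanSpace ℝ (Fin N) => Real.exp (l * y i0)) x e
      = l * Real.exp (l * x i0) * e i0 := by
  rw [(psi_hasFDerivAt l i0 x).fderiv]
  simp

theorem D2_psi (l : ℝ) (i0 : Fin N) (x e : EuclideanSpace ℝ (Fin N)) :
    D2 (fun y : EuclideanSpace ℝ (Fin N) => Real.exp (l * y i0)) x e
      = l * l * Real.exp (l * x i0) * (e i0) * (e i0) := by
  unfold D2
  have h1 : (fun y : EuclideanSpace ℝ (Fin N) =>
        fderiv ℝ (fun z : EuclideanSpace ℝ (Fin N) => Real.exp (l * z i0)) y e)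
      = fun y : EuclideanSpace ℝ (Fin N) => (l * e i0) * Real.exp (l * y i0) := by
    funext y; rw [fderiv_psi]; ring
  rw [h1, fderiv_const_mul (((psi_contDiff l i0).differentiable (by norm_num)) x) (l * e i0)]
  rw [ContinuousLinearMap.smul_apply, smul_eq_mul, fderiv_psi]
  ring

theorem lap_psi (l : ℝ) (i0 : Fin N) (x : EuclideanSpace ℝ (Fin N)) :
    lap N (fun y : EuclideanSpace ℝ (Fin N) => Real.exp (l * y i0)) x
      = l * l * Real.exp (l * x i0) := by
  rw [lap_eq_sum]
  have h1 : ∀ i : Fin N, D2 (fun y : EuclideanSpace ℝ (Fin N) => Real.exp (l * y i0)) x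
      (EuclideanSpace.single i 1)
      = if i0 = i then l * l * Real.exp (l * x i0) else 0 := by
    intro i
    rw [D2_psi, EuclideanSpace.single_apply]
    rcases eq_or_ne i0 i with h | h
    · simp [h]
    · simp [h]
  rw [Finset.sum_congr rfl fun i _ => h1 i, Finset.sum_ite_eq]
  simp

theorem sum_fderiv_single (w : EuclideanSpace ℝ (Fin N) → ℝ) (x : EuclideanSpace ℝ (Fin N))
    (i0 : Fin N) :
    ∑ i : Fin N, fderiv ℝ w x (EuclideanSpace.single i 1)
        * (EuclideanSpace.single i (1:ℝ)) i0
      = fderiv ℝ w x (EuclideanSpace.single i0 1) := by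
  have h1 : ∀ i : Fin N, fderiv ℝ w x (EuclideanSpace.single i 1)
      * (EuclideanSpace.single i (1:ℝ)) i0
      = if i0 = i then fderiv ℝ w x (EuclideanSpace.single i0 1) else 0 := by
    intro i
    rw [EuclideanSpace.single_apply]
    rcases eq_or_ne i0 i with h | h
    · simp [h]
    · simp [h]
  rw [Finset.sum_congr rfl fun i _ => h1 i, Finset.sum_ite_eq]
  simp

theorem abs_coord_le_norm (x : EuclideanSpace ℝ (Fin N)) (i0 : Fin N) : |x i0| ≤ ‖x‖ := by
  rw [EuclideanSpace.norm_eq x]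
  rw [show |x i0| = Real.sqrt ((x i0)^2) from (Real.sqrt_sq_eq_abs _).symm]
  apply Real.sqrt_le_sqrt
  have := Finset.single_le_sum (f := fun i => ‖x i‖^2) (fun i _ => sq_nonneg _)
    (Finset.mem_univ i0)
  simpa [Real.norm_eq_abs, sq_abs] using this

set_option maxHeartbeats 1000000 in
theorem key (hN : 2 ≤ N) (V u W w : EuclideanSpace ℝ (Fin N) → ℝ)
    (hucont : ContinuousOn u {x : EuclideanSpace ℝ (Fin N) | 1 ≤ ‖x‖})
    (huC2 : ContDiffOn ℝ 2 u {x : EuclideanSpace ℝ (Fin N) | 1 < ‖x‖})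
    (husub : ∀ x : EuclideanSpace ℝ (Fin N), 1 < ‖x‖ → -lap N u x - V x * u x ≤ 0)
    (hWcont : ContinuousOn W {x : EuclideanSpace ℝ (Fin N) | 1 ≤ ‖x‖})
    (hWC2 : ContDiffOn ℝ 2 W {x : EuclideanSpace ℝ (Fin N) | 1 < ‖x‖})
    (hWpos : ∀ x : EuclideanSpace ℝ (Fin N), 1 ≤ ‖x‖ → 0 < W x)
    (hWsuper : ∀ x : EuclideanSpace ℝ (Fin N), 1 < ‖x‖ → 0 ≤ -lap N W x - V x * W x)
    (hwcont : ContinuousOn w {x : EuclideanSpace ℝ (Fin N) | 1 ≤ ‖x‖})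
    (hwC2 : ContDiffOn ℝ 2 w {x : EuclideanSpace ℝ (Fin N) | 1 < ‖x‖})
    (hwpos : ∀ x : EuclideanSpace ℝ (Fin N), 1 ≤ ‖x‖ → 0 < w x)
    (hwsuper : ∀ x : EuclideanSpace ℝ (Fin N), 1 < ‖x‖ → 0 ≤ -lap N w x - V x * w x)
    (hsmall : ∀ δ : ℝ, 0 < δ → ∃ R : ℝ, ∀ x : EuclideanSpace ℝ (Fin N),
      R < ‖x‖ → 1 ≤ ‖x‖ → u x / w x < δ) :
    ∃ C : ℝ, 0 < C ∧ ∀ x : EuclideanSpace ℝ (Fin N), 1 ≤ ‖x‖ → u x ≤ C * W x := by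
  classical
  have i0 : Fin N := ⟨0, by omega⟩
  have hOopen : IsOpen {x : EuclideanSpace ℝ (Fin N) | 1 < ‖x‖} :=
    isOpen_lt continuous_const continuous_norm
  -- the max of u/W on the unit sphere
  have hx1 : EuclideanSpace.single i0 (1:ℝ) ∈ Metric.sphere (0:EuclideanSpace ℝ (Fin N)) 1 := by
    rw [mem_sphere_zero_iff_norm, EuclideanSpace.norm_single]
    norm_num
  have hsphS : Metric.sphere (0:EuclideanSpace ℝ (Fin N)) 1
      ⊆ {x : EuclideanSpace ℝ (Fin N) | 1 ≤ ‖x‖} := by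
    intro x hx
    rw [mem_sphere_zero_iff_norm] at hx
    simp [hx]
  have hratio : ContinuousOn (fun x => u x / W x)
      (Metric.sphere (0:EuclideanSpace ℝ (Fin N)) 1) :=
    (hucont.mono hsphS).div (hWcont.mono hsphS)
      (fun x hx => (hWpos x (hsphS hx)).ne')
  obtain ⟨y₀, hy₀mem, hy₀max'⟩ :=
    (isCompact_sphere (0:EuclideanSpace ℝ (Fin N)) 1).exists_isMaxOn ⟨_, hx1⟩ hratio
  have hy₀max := isMaxOn_iff.mp hy₀max'
  set C : ℝ := max (u y₀ / W y₀) 1 with hCdef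
  have hCpos : 0 < C := lt_of_lt_of_le one_pos (le_max_right _ _)
  have hCsphere : ∀ x : EuclideanSpace ℝ (Fin N), ‖x‖ = 1 → u x ≤ C * W x := by
    intro x hx
    have hxmem : x ∈ Metric.sphere (0:EuclideanSpace ℝ (Fin N)) 1 := by
      rwa [mem_sphere_zero_iff_norm]
    have h1 : u x / W x ≤ C := le_trans (hy₀max x hxmem) (le_max_left _ _)
    have hWx : 0 < W x := hWpos x (hsphS hxmem)
    calc u x = u x / W x * W x := by rw [div_mul_cancel₀ _ hWx.ne']
    _ ≤ C * W x := mul_le_mul_of_nonneg_right h1 hWx.le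
  refine ⟨C, hCpos, ?_⟩
  by_contra hcon
  push_neg at hcon
  obtain ⟨x₀, hx₀S, hx₀u⟩ := hcon
  have hx₀norm : 1 < ‖x₀‖ := by
    rcases lt_or_eq_of_le hx₀S with hlt | heq
    · exact hlt
    · exact absurd (hCsphere x₀ heq.symm) (not_le.mpr hx₀u)
  set v : EuclideanSpace ℝ (Fin N) → ℝ := fun x => u x - C * W x with hvdef
  have hv₀ : 0 < v x₀ := by simp only [hvdef]; linarith
  have hwx₀ : 0 < w x₀ := hwpos x₀ hx₀S
  set ε : ℝ := v x₀ / (2 * w x₀) with hεdef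
  have hε : 0 < ε := div_pos hv₀ (by linarith)
  obtain ⟨R, hR⟩ := hsmall ε hε
  set R' : ℝ := max R ‖x₀‖ + 1 with hR'def
  have hR'R : R < R' := lt_of_le_of_lt (le_max_left _ _) (lt_add_one _)
  have hR'x₀ : ‖x₀‖ < R' := lt_of_le_of_lt (le_max_right _ _) (lt_add_one _)
  have hR'1 : 1 < R' := lt_trans hx₀norm hR'x₀
  set A : Set (EuclideanSpace ℝ (Fin N)) := {x | 1 ≤ ‖x‖ ∧ ‖x‖ ≤ R'} with hAdef
  have hAS : A ⊆ {x : EuclideanSpace ℝ (Fin N) | 1 ≤ ‖x‖} := fun x hx => hx.1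
  have hAclosed : IsClosed A :=
    (isClosed_le continuous_const continuous_norm).inter
      (isClosed_le continuous_norm continuous_const)
  have hAcomp : IsCompact A := by
    refine (isCompact_closedBall (0:EuclideanSpace ℝ (Fin N)) R').of_isClosed_subset
      hAclosed ?_
    intro x hx
    rw [Metric.mem_closedBall, dist_zero_right]
    exact hx.2
  have hx₀A : x₀ ∈ A := ⟨hx₀S, hR'x₀.le⟩
  have hwposA : ∀ x ∈ A, 0 < w x := fun x hx => hwpos x (hAS hx)
  set h : EuclideanSpace ℝ (Fin N) → ℝ := fun x => v x / w x with hhdef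
  have hhx₀ : h x₀ = 2 * ε := by
    simp only [hhdef, hεdef]
    field_simp
  have hvcont : ContinuousOn v {x : EuclideanSpace ℝ (Fin N) | 1 ≤ ‖x‖} :=
    hucont.sub (continuousOn_const.mul hWcont)
  have hhcont : ContinuousOn h A :=
    (hvcont.mono hAS).div (hwcont.mono hAS) (fun x hx => (hwposA x hx).ne')
  have hbdry1 : ∀ x : EuclideanSpace ℝ (Fin N), ‖x‖ = 1 → h x ≤ 0 := by
    intro x hx
    have h1 : v x ≤ 0 := by
      have := hCsphere x hx
      simp only [hvdef]; linarith
    exact div_nonpos_of_nonpos_of_nonneg h1 (hwpos x (by simp [hx])).le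
  have hbdry2 : ∀ x : EuclideanSpace ℝ (Fin N), ‖x‖ = R' → h x < ε := by
    intro x hx
    have hx1 : 1 ≤ ‖x‖ := by rw [hx]; linarith
    have h1 : u x / w x < ε := hR x (by rw [hx]; exact hR'R) hx1
    have h2 : v x ≤ u x := by
      have := (hWpos x hx1).le
      simp only [hvdef]
      nlinarith
    calc h x ≤ u x / w x := (div_le_div_iff_of_pos_right (hwpos x hx1)).mpr h2
    _ < ε := h1
  -- the compact set K where h ≥ 3ε/2
  set K : Set (EuclideanSpace ℝ (Fin N)) :=
    A ∩ (fun x => v x - 3/2 * ε * w x) ⁻¹' Set.Ici 0 with hKdef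
  have hKiff : ∀ x, x ∈ K ↔ (x ∈ A ∧ 3/2 * ε ≤ h x) := by
    intro x
    constructor
    · rintro ⟨hxA, hx2⟩
      refine ⟨hxA, ?_⟩
      rw [hhdef, le_div_iff₀ (hwposA x hxA)]
      simpa [mul_comm] using hx2
    · rintro ⟨hxA, hx2⟩
      refine ⟨hxA, ?_⟩
      rw [hhdef, le_div_iff₀ (hwposA x hxA)] at hx2
      simp only [Set.mem_preimage, Set.mem_Ici]
      linarith
  have hKclosed : IsClosed K :=
    ContinuousOn.preimage_isClosed_of_isClosed
      ((hvcont.sub (continuousOn_const.mul hwcont)).mono hAS) hAclosed isClosed_Ici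
  have hKcomp : IsCompact K := hAcomp.of_isClosed_subset hKclosed Set.inter_subset_left
  have hKA : K ⊆ A := Set.inter_subset_left
  have hKopen : K ⊆ {x : EuclideanSpace ℝ (Fin N) | 1 < ‖x‖} := by
    intro x hx
    rw [hKiff] at hx
    rcases lt_or_eq_of_le hx.1.1 with hlt | heq
    · exact hlt
    · exact absurd (lt_of_le_of_lt (hbdry1 x heq.symm) (by linarith)) (not_lt.mpr hx.2)
  have hx₀K : x₀ ∈ K := by
    rw [hKiff]
    exact ⟨hx₀A, by rw [hhx₀]; linarith⟩
  -- lower bound for w and upper bound for ‖∇w‖ on K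
  obtain ⟨xm, hxmK, hxmmin'⟩ := hKcomp.exists_isMinOn ⟨x₀, hx₀K⟩
    (hwcont.mono (Set.Subset.trans hKA hAS))
  have hxmmin := isMinOn_iff.mp hxmmin'
  set m : ℝ := w xm with hmdef
  have hm : 0 < m := hwpos xm (hAS (hKA hxmK))
  have hfdcont : ContinuousOn (fun x => ‖fderiv ℝ w x‖) K :=
    ((hwC2.continuousOn_fderiv_of_isOpen hOopen (by norm_num)).mono hKopen).norm
  obtain ⟨xB, hxBK, hxBmax'⟩ := hKcomp.exists_isMaxOn ⟨x₀, hx₀K⟩ hfdcont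
  have hxBmax := isMaxOn_iff.mp hxBmax'
  set B : ℝ := ‖fderiv ℝ w xB‖ with hBdef
  have hB0 : 0 ≤ B := norm_nonneg _
  set l : ℝ := (2 * B + 1) / m with hldef
  have hl : 0 < l := div_pos (by linarith) hm
  have hlm : l * m = 2 * B + 1 := div_mul_cancel₀ _ hm.ne'
  -- the auxiliary exponential
  set ψ : EuclideanSpace ℝ (Fin N) → ℝ := fun x => Real.exp (l * x i0) with hψdef
  have hψpos : ∀ x, 0 < ψ x := fun x => Real.exp_pos _
  set P : ℝ := Real.exp (l * R') with hPdef
  have hP : 0 < P := Real.exp_pos _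
  have hψA : ∀ x ∈ A, ψ x ≤ P := by
    intro x hx
    apply Real.exp_le_exp.mpr
    apply mul_le_mul_of_nonneg_left _ hl.le
    exact le_trans (le_abs_self _) (le_trans (abs_coord_le_norm x i0) hx.2)
  set θ : ℝ := ε / (2 * P) with hθdef
  have hθ : 0 < θ := div_pos hε (by linarith)
  have hθψ : ∀ x ∈ A, θ * ψ x ≤ ε / 2 := by
    intro x hx
    calc θ * ψ x ≤ θ * P := mul_le_mul_of_nonneg_left (hψA x hx) hθ.le
    _ = ε / 2 := by rw [hθdef]; field_simp
  -- maximize h + θψ over A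
  set hfun : EuclideanSpace ℝ (Fin N) → ℝ := fun x => h x + θ * ψ x with hhfundef
  have hhfuncont : ContinuousOn hfun A :=
    hhcont.add (continuousOn_const.mul ((psi_contDiff l i0).continuous.continuousOn))
  obtain ⟨z, hzA, hzmax'⟩ := hAcomp.exists_isMaxOn ⟨x₀, hx₀A⟩ hhfuncont
  have hzmax := isMaxOn_iff.mp hzmax'
  have hzlow : 2 * ε ≤ hfun z := by
    have h1 : 2 * ε ≤ hfun x₀ := by
      have := mul_pos hθ (hψpos x₀)
      simp only [hhfundef, hhx₀]
      linarith
    exact le_trans h1 (hzmax x₀ hx₀A)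
  have hz1 : 1 < ‖z‖ := by
    rcases lt_or_eq_of_le hzA.1 with hlt | heq
    · exact hlt
    · exfalso
      have h1 : hfun z ≤ 0 + ε / 2 :=
        add_le_add (hbdry1 z heq.symm) (hθψ z hzA)
      simp only [hhfundef] at hzlow h1
      linarith [hε, hzlow, h1]
  have hz2 : ‖z‖ < R' := by
    rcases lt_or_eq_of_le hzA.2 with hlt | heq
    · exact hlt
    · exfalso
      have h1 : hfun z ≤ ε + ε / 2 :=
        add_le_add (hbdry2 z heq).le (hθψ z hzA)
      simp only [hhfundef] at hzlow h1
      linarith [hε, hzlow, h1]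
  have hzK : z ∈ K := by
    rw [hKiff]
    refine ⟨hzA, ?_⟩
    have h1 : θ * ψ z ≤ ε / 2 := hθψ z hzA
    have hzlow2 := hzlow
    simp only [hhfundef] at hzlow2
    linarith [hzlow2, h1]
  have hwz : 0 < w z := hwposA z hzA
  -- the comparison function F
  set c : ℝ := hfun z with hcdef
  set g : EuclideanSpace ℝ (Fin N) → ℝ := fun x => c - θ * ψ x with hgdef
  have hgz : g z = h z := by
    simp only [hgdef, hcdef, hhfundef]
    ring
  have hgzpos : 0 < g z := by
    rw [hgz]
    have := (hKiff z).mp hzK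
    linarith [this.2]
  set F : EuclideanSpace ℝ (Fin N) → ℝ := fun x => u x - C * W x - w x * g x with hFdef
  have hFz : F z = 0 := by
    have h1 : v z = h z * w z := by
      rw [hhdef]
      field_simp
    simp only [hFdef, hgz]
    simp only [hvdef] at h1
    rw [h1]
    ring
  have hFA : ∀ x ∈ A, F x ≤ 0 := by
    intro x hx
    have h1 : hfun x ≤ c := hzmax x hx
    have h2 : h x ≤ g x := by
      simp only [hhfundef] at h1
      simp only [hgdef]
      linarith
    have h3 : v x ≤ g x * w x := by
      rw [hhdef, div_le_iff₀ (hwposA x hx)] at h2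
      exact h2
    simp only [hFdef, hvdef] at h3 ⊢
    linarith [h3]
  -- F has a local max at z
  have hUopen : IsOpen {x : EuclideanSpace ℝ (Fin N) | 1 < ‖x‖ ∧ ‖x‖ < R'} :=
    (isOpen_lt continuous_const continuous_norm).inter
      (isOpen_lt continuous_norm continuous_const)
  have hlocmax : IsLocalMax F z := by
    filter_upwards [hUopen.mem_nhds ⟨hz1, hz2⟩] with y hy
    rw [hFz]
    exact hFA y ⟨hy.1.le, hy.2.le⟩
  -- smoothness at z
  have hznhds : {x : EuclideanSpace ℝ (Fin N) | 1 < ‖x‖} ∈ 𝓝 z := hOopen.mem_nhds hz1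
  have huz : ContDiffAt ℝ 2 u z := huC2.contDiffAt hznhds
  have hWz2 : ContDiffAt ℝ 2 W z := hWC2.contDiffAt hznhds
  have hwz2 : ContDiffAt ℝ 2 w z := hwC2.contDiffAt hznhds
  have hψz2 : ContDiffAt ℝ 2 ψ z := (psi_contDiff l i0).contDiffAt
  have hgz2 : ContDiffAt ℝ 2 g z := contDiffAt_const.sub (contDiffAt_const.mul hψz2)
  have hFz2 : ContDiffAt ℝ 2 F z :=
    (huz.sub (contDiffAt_const.mul hWz2)).sub (hwz2.mul hgz2)
  have hlapF : lap N F z ≤ 0 := lap_nonpos_of_isLocalMax hFz2 hlocmax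
  -- compute lap F z
  have hψraw : ContDiffAt ℝ 2 (fun x : EuclideanSpace ℝ (Fin N) => Real.exp (l * x i0)) z :=
    (psi_contDiff l i0).contDiffAt
  have hgraw : ContDiffAt ℝ 2
      (fun x : EuclideanSpace ℝ (Fin N) => c - θ * Real.exp (l * x i0)) z :=
    contDiffAt_const.sub (contDiffAt_const.mul hψraw)
  have hE0 : lap N F z = lap N (fun x => u x - C * W x
      - w x * (c - θ * Real.exp (l * x i0))) z := by
    simp only [hFdef, hgdef, hψdef]
  have E1 : lap N (fun x => u x - C * W x - w x * (c - θ * Real.exp (l * x i0))) z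
      = lap N (fun x => u x - C * W x) z
        - lap N (fun x => w x * (c - θ * Real.exp (l * x i0))) z :=
    lap_sub (huz.sub (contDiffAt_const.mul hWz2)) (hwz2.mul hgraw)
  have E2 : lap N (fun x => u x - C * W x) z = lap N u z - C * lap N W z := by
    rw [lap_sub huz (contDiffAt_const.mul hWz2), lap_const_mul hWz2 C]
  have E3 := lap_mul (x := z) hwz2 hgraw
  have E4 : lap N (fun x : EuclideanSpace ℝ (Fin N) => c - θ * Real.exp (l * x i0)) z
      = -(θ * (l * l * Real.exp (l * z i0))) := by
    rw [lap_sub contDiffAt_const (contDiffAt_const.mul hψraw), lap_const,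
      lap_const_mul hψraw θ, lap_psi]
    ring
  have E5 : ∀ e : EuclideanSpace ℝ (Fin N),
      fderiv ℝ (fun x : EuclideanSpace ℝ (Fin N) => c - θ * Real.exp (l * x i0)) z e
      = -(θ * (l * Real.exp (l * z i0) * e i0)) := by
    intro e
    have hd0 : DifferentiableAt ℝ
        (fun x : EuclideanSpace ℝ (Fin N) => Real.exp (l * x i0)) z :=
      ((psi_contDiff l i0).differentiable (by norm_num)) z
    have hd1 : DifferentiableAt ℝ
        (fun x : EuclideanSpace ℝ (Fin N) => θ * Real.exp (l * x i0)) z :=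
      hd0.const_mul θ
    rw [fderiv_fun_sub (differentiableAt_const c) hd1, fderiv_const_mul hd0 θ]
    simp only [ContinuousLinearMap.sub_apply, ContinuousLinearMap.smul_apply,
      smul_eq_mul, fderiv_fun_const, Pi.zero_apply, ContinuousLinearMap.zero_apply,
      fderiv_psi]
    ring
  have E6 : ∑ i : Fin N, fderiv ℝ w z (EuclideanSpace.single i 1)
        * fderiv ℝ (fun x : EuclideanSpace ℝ (Fin N) => c - θ * Real.exp (l * x i0)) z
          (EuclideanSpace.single i 1)
      = -(θ * (l * Real.exp (l * z i0)))
        * fderiv ℝ w z (EuclideanSpace.single i0 1) := by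
    have h1 : ∀ i : Fin N, fderiv ℝ w z (EuclideanSpace.single i 1)
        * fderiv ℝ (fun x : EuclideanSpace ℝ (Fin N) => c - θ * Real.exp (l * x i0)) z
          (EuclideanSpace.single i 1)
        = -(θ * (l * Real.exp (l * z i0)))
          * (fderiv ℝ w z (EuclideanSpace.single i 1)
            * (EuclideanSpace.single i (1:ℝ)) i0) := by
      intro i
      rw [E5 (EuclideanSpace.single i 1)]
      ring
    rw [Finset.sum_congr rfl fun i _ => h1 i, ← Finset.mul_sum, sum_fderiv_single]
  have hcomp : lap N F z = lap N u z - C * lap N W z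
      - (w z * (-(θ * (l * l * Real.exp (l * z i0))))
        + (c - θ * Real.exp (l * z i0)) * lap N w z
        + 2 * (-(θ * (l * Real.exp (l * z i0)))
            * fderiv ℝ w z (EuclideanSpace.single i0 1))) := by
    rw [hE0, E1, E2, E3, E4, E6]
  -- the inequalities
  have hu_ineq := husub z hz1
  have hW_ineq := hWsuper z hz1
  have hw_ineq := hwsuper z hz1
  have t2 : 0 ≤ C * (-lap N W z - V z * W z) := mul_nonneg hCpos.le hW_ineq
  have t3 : 0 ≤ (c - θ * Real.exp (l * z i0)) * (-lap N w z - V z * w z) := by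
    have hgzpos' := hgzpos
    simp only [hgdef, hψdef] at hgzpos'
    exact mul_nonneg hgzpos'.le hw_ineq
  have hFzV : V z * (u z - C * W z - w z * (c - θ * Real.exp (l * z i0))) = 0 := by
    have hFz' := hFz
    simp only [hFdef, hgdef, hψdef] at hFz'
    rw [hFz', mul_zero]
  have hm_ineq : m ≤ w z := hxmmin z hzK
  have hD0 : |fderiv ℝ w z (EuclideanSpace.single i0 1)| ≤ B := by
    have h1 : ‖fderiv ℝ w z‖ ≤ B := hxBmax z hzK
    have h2 := (fderiv ℝ w z).le_opNorm (EuclideanSpace.single i0 (1:ℝ))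
    rw [EuclideanSpace.norm_single] at h2
    simp only [Real.norm_eq_abs, norm_one, mul_one] at h2
    exact le_trans h2 h1
  have hD0' : -B ≤ fderiv ℝ w z (EuclideanSpace.single i0 1) := (abs_le.mp hD0).1
  have hkey : 1 ≤ l * w z + 2 * fderiv ℝ w z (EuclideanSpace.single i0 1) := by
    have h1 : l * m ≤ l * w z := mul_le_mul_of_nonneg_left hm_ineq hl.le
    linarith [hlm, hD0', h1]
  have hexp : 0 < Real.exp (l * z i0) := Real.exp_pos _
  have hkey2 : 0 < θ * (l * Real.exp (l * z i0))
      * (l * w z + 2 * fderiv ℝ w z (EuclideanSpace.single i0 1)) :=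
    mul_pos (mul_pos hθ (mul_pos hl hexp)) (lt_of_lt_of_le one_pos hkey)
  rw [hcomp] at hlapF
  linarith only [hlapF, hu_ineq, t2, t3, hFzV, hkey2]


end PLaux


/-- Phragmén–Lindelöf alternative for `p = 2` on the exterior of the unit ball:
either `u` is dominated by every positive supersolution, or `u` is not smaller than
any positive supersolution (`limsup u/w > 0`). -/
theorem phragmen_lindelof_alternative_p_eq_two (N : ℕ) (hN : 2 ≤ N)
    (V u : EuclideanSpace ℝ (Fin N) → ℝ)
    (hVcont : ContinuousOn V {x : EuclideanSpace ℝ (Fin N) | 1 ≤ ‖x‖})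
    (hstar : ∃ φ : EuclideanSpace ℝ (Fin N) → ℝ,
      ContDiffOn ℝ 2 φ {x : EuclideanSpace ℝ (Fin N) | 1 < ‖x‖} ∧
      (∀ x : EuclideanSpace ℝ (Fin N), 1 < ‖x‖ → 0 < φ x) ∧
      (∀ x : EuclideanSpace ℝ (Fin N), 1 < ‖x‖ → 0 ≤ -lap N φ x - V x * φ x) ∧
      (∃ x : EuclideanSpace ℝ (Fin N), 1 < ‖x‖ ∧ -lap N φ x - V x * φ x ≠ 0))
    (hu0 : ∀ x : EuclideanSpace ℝ (Fin N), 1 ≤ ‖x‖ → 0 ≤ u x)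
    (hucont : ContinuousOn u {x : EuclideanSpace ℝ (Fin N) | 1 ≤ ‖x‖})
    (huC2 : ContDiffOn ℝ 2 u {x : EuclideanSpace ℝ (Fin N) | 1 < ‖x‖})
    (husub : ∀ x : EuclideanSpace ℝ (Fin N), 1 < ‖x‖ → -lap N u x - V x * u x ≤ 0) :
    (∀ w : EuclideanSpace ℝ (Fin N) → ℝ,
      ContinuousOn w {x : EuclideanSpace ℝ (Fin N) | 1 ≤ ‖x‖} →
      ContDiffOn ℝ 2 w {x : EuclideanSpace ℝ (Fin N) | 1 < ‖x‖} →
      (∀ x : EuclideanSpace ℝ (Fin N), 1 ≤ ‖x‖ → 0 < w x) →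
      (∀ x : EuclideanSpace ℝ (Fin N), 1 < ‖x‖ → 0 ≤ -lap N w x - V x * w x) →
      ∃ C : ℝ, 0 < C ∧ ∀ x : EuclideanSpace ℝ (Fin N), 1 ≤ ‖x‖ → u x ≤ C * w x)
    ∨
    (∀ w : EuclideanSpace ℝ (Fin N) → ℝ,
      ContinuousOn w {x : EuclideanSpace ℝ (Fin N) | 1 ≤ ‖x‖} →
      ContDiffOn ℝ 2 w {x : EuclideanSpace ℝ (Fin N) | 1 < ‖x‖} →
      (∀ x : EuclideanSpace ℝ (Fin N), 1 ≤ ‖x‖ → 0 < w x) →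
      (∀ x : EuclideanSpace ℝ (Fin N), 1 < ‖x‖ → 0 ≤ -lap N w x - V x * w x) →
      ∃ δ : ℝ, 0 < δ ∧ ∀ R : ℝ, ∃ x : EuclideanSpace ℝ (Fin N),
        R < ‖x‖ ∧ 1 ≤ ‖x‖ ∧ δ ≤ u x / w x) := by
  by_cases hL : (∀ w : EuclideanSpace ℝ (Fin N) → ℝ,
      ContinuousOn w {x : EuclideanSpace ℝ (Fin N) | 1 ≤ ‖x‖} →
      ContDiffOn ℝ 2 w {x : EuclideanSpace ℝ (Fin N) | 1 < ‖x‖} →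
      (∀ x : EuclideanSpace ℝ (Fin N), 1 ≤ ‖x‖ → 0 < w x) →
      (∀ x : EuclideanSpace ℝ (Fin N), 1 < ‖x‖ → 0 ≤ -lap N w x - V x * w x) →
      ∃ C : ℝ, 0 < C ∧ ∀ x : EuclideanSpace ℝ (Fin N), 1 ≤ ‖x‖ → u x ≤ C * w x)
  · exact Or.inl hL
  · right
    push_neg at hL
    obtain ⟨w₀, hw₀cont, hw₀C2, hw₀pos, hw₀super, hw₀bad⟩ := hL
    intro w hwcont hwC2 hwpos hwsuper
    by_contra hδ
    push_neg at hδ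
    have hsmall : ∀ δ : ℝ, 0 < δ → ∃ R : ℝ, ∀ x : EuclideanSpace ℝ (Fin N),
        R < ‖x‖ → 1 ≤ ‖x‖ → u x / w x < δ := by
      intro δ hδ0
      obtain ⟨R, hR⟩ := hδ δ hδ0
      exact ⟨R, fun x h1 h2 => hR x h1 h2⟩
    obtain ⟨C, hCpos, hCle⟩ := PLaux.key hN V u w₀ w hucont huC2 husub
      hw₀cont hw₀C2 hw₀pos hw₀super hwcont hwC2 hwpos hwsuper hsmall
    obtain ⟨x, hx1, hx2⟩ := hw₀bad C hCpos
    exact absurd (hCle x hx1) (not_le.mpr hx2)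
end

section
/- (Maximum principle for the quotient.) Let N ≥ 2 be an integer, p > 1 real, 0 < r₀ < R₀ ≤ ∞, and let V be a continuous potential on [r₀,R₀). Let u be a positive strictly monotone C² radial subsolution and v a positive strictly monotone C² radial supersolution of −Δ_p u − V|u|^{p−2}u = 0 on [r₀,R₀), and assume in addition that either u is a strict radial subsolution or v is a strict radial supersolution. If (u/v)'(ρ) = 0 for some ρ ∈ (r₀,R₀), then (u/v)''(ρ) > 0. In particular, u/v has no local maximum point in (r₀,R₀). -/
/-!
At a critical point `ρ` of `u / v` put `k = u(ρ) / v(ρ)`; then `u = k v` and `u' = k v'` at `ρ`,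
so in the residuals `R[w] = -|w'|^{p-2} L w - V |w|^{p-2} w` the first-order and potential
terms match after scaling by `k^{p-1}`, and what is left is
`R[u] - k^{p-1} R[v] = -(p-1) k^{p-2} |v'|^{p-2} (u'' - k v'')`.
The sub/supersolution inequalities, one of them strict, make this negative; as the factor in
front of `u'' - k v''` is nonnegative, this forces `u'' - k v'' > 0`, i.e.
`(u / v)''(ρ) = (u'' - k v'')(ρ) / v(ρ) > 0`.
The second-derivative test then rules out a local maximum.
-/

open Filter Topology

noncomputable def radialResidual (N : ℕ) (p : ℝ) (V u : ℝ → ℝ) (r : ℝ) : ℝ :=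
  -(|deriv u r| ^ (p - 2) * Lrad N p u r) - V r * (|u r| ^ (p - 2) * u r)

section RadialResidual

variable {N : ℕ} {p : ℝ} {V u v : ℝ → ℝ} {r k : ℝ}

theorem radialResidual_sub_rpow_mul (hk : 0 < k) (hu : u r = k * v r)
    (hu' : deriv u r = k * deriv v r) :
    radialResidual N p V u r - k ^ (p - 1) * radialResidual N p V v r =
      -((p - 1) * k ^ (p - 2) * |deriv v r| ^ (p - 2) *
        (deriv (deriv u) r - k * deriv (deriv v) r)) := by
  have hpow : k ^ (p - 1) = k ^ (p - 2) * k := by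
    rw [← Real.rpow_add_one hk.ne']; ring_nf
  simp only [radialResidual, Lrad, hu, hu', hpow, abs_mul, abs_of_pos hk,
    Real.mul_rpow hk.le (abs_nonneg _)]
  ring

theorem deriv_deriv_sub_pos_of_radialResidual (hp : 1 < p) (hk : 0 < k) (hu : u r = k * v r)
    (hu' : deriv u r = k * deriv v r)
    (hsub : radialResidual N p V u r ≤ 0) (hsup : 0 ≤ radialResidual N p V v r)
    (hstrict : radialResidual N p V u r < 0 ∨ 0 < radialResidual N p V v r) :
    0 < deriv (deriv u) r - k * deriv (deriv v) r := by
  have hk' : 0 < k ^ (p - 1) := Real.rpow_pos_of_pos hk _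
  have hcomb : radialResidual N p V u r - k ^ (p - 1) * radialResidual N p V v r < 0 := by
    rcases hstrict with h | h <;> nlinarith
  rw [radialResidual_sub_rpow_mul hk hu hu', neg_lt_zero] at hcomb
  exact pos_of_mul_pos_right hcomb (by positivity)

end RadialResidual

section Quotient

variable {u v : ℝ → ℝ} {ρ : ℝ}

theorem deriv_div_eq_zero_iff (hu : DifferentiableAt ℝ u ρ) (hv : DifferentiableAt ℝ v ρ)
    (hv0 : v ρ ≠ 0) :
    deriv (fun r => u r / v r) ρ = 0 ↔ deriv u ρ = u ρ / v ρ * deriv v ρ := by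
  rw [deriv_fun_div hu hv hv0, div_eq_zero_iff, or_iff_left (pow_ne_zero 2 hv0), sub_eq_zero,
    div_mul_eq_mul_div, eq_div_iff hv0]

theorem deriv_deriv_div_of_deriv_div_eq_zero (hu : ContDiffAt ℝ 2 u ρ)
    (hv : ContDiffAt ℝ 2 v ρ) (hv0 : v ρ ≠ 0) (hd : deriv (fun r => u r / v r) ρ = 0) :
    deriv (deriv fun r => u r / v r) ρ =
      (deriv (deriv u) ρ - u ρ / v ρ * deriv (deriv v) ρ) / v ρ := by
  have hquot : deriv (fun r => u r / v r) =ᶠ[𝓝 ρ]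
      fun r => (deriv u r * v r - u r * deriv v r) / v r ^ 2 := by
    filter_upwards [hu.eventually (by simp), hv.eventually (by simp),
      hv.continuousAt.eventually_ne hv0] with r hur hvr hvr0
    exact deriv_fun_div (hur.differentiableAt (by simp)) (hvr.differentiableAt (by simp)) hvr0
  have hu₁ := hu.differentiableAt (by simp)
  have hv₁ := hv.differentiableAt (by simp)
  have hu₂ := (hu.derivWithin (m := 1) (by norm_num)).differentiableAt (by simp)
  have hv₂ := (hv.derivWithin (m := 1) (by norm_num)).differentiableAt (by simp)
  have hnum : deriv u ρ * v ρ - u ρ * deriv v ρ = 0 := by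
    rw [deriv_div_eq_zero_iff hu₁ hv₁ hv0] at hd
    rw [hd]; field_simp; ring
  rw [hquot.deriv_eq, ((hu₂.hasDerivAt.fun_mul hv₁.hasDerivAt).fun_sub
    (hu₁.hasDerivAt.fun_mul hv₂.hasDerivAt)).fun_div (hv₁.hasDerivAt.fun_pow 2)
    (pow_ne_zero 2 hv0) |>.deriv]
  simp only [hnum]
  field_simp
  ring

end Quotient

theorem not_isLocalMax_of_deriv_deriv_pos {f : ℝ → ℝ} {x : ℝ} (hf : 0 < deriv (deriv f) x)
    (hd : deriv f x = 0) (hc : ContinuousAt f x) : ¬IsLocalMax f x := by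
  intro hmax
  have hconst : f =ᶠ[𝓝 x] fun _ => f x :=
    ((isLocalMin_of_deriv_deriv_pos hf hd hc).and hmax).mono fun _ h => le_antisymm h.2 h.1
  simp [hconst.deriv.deriv_eq] at hf

theorem setOf_le_and_coe_lt_mem_nhds {a ρ : ℝ} {b : EReal} (ha : a < ρ) (hb : (ρ : EReal) < b) :
    {r : ℝ | a ≤ r ∧ (r : EReal) < b} ∈ 𝓝 ρ :=
  inter_mem (Ici_mem_nhds ha)
    (continuous_coe_real_ereal.continuousAt.preimage_mem_nhds (Iio_mem_nhds hb))

theorem quotient_maximum_principle_general (N : ℕ) (p : ℝ) (hp : 1 < p)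
    (r₀ : ℝ) (R₀ : EReal)
    (V u v : ℝ → ℝ)
    (huC2 : ContDiffOn ℝ 2 u {r : ℝ | r₀ ≤ r ∧ (r : EReal) < R₀})
    (hvC2 : ContDiffOn ℝ 2 v {r : ℝ | r₀ ≤ r ∧ (r : EReal) < R₀})
    (hu0 : ∀ r : ℝ, r₀ ≤ r → (r : EReal) < R₀ → 0 < u r)
    (hv0 : ∀ r : ℝ, r₀ ≤ r → (r : EReal) < R₀ → 0 < v r)
    (husub : ∀ r : ℝ, r₀ ≤ r → (r : EReal) < R₀ →
      -(|deriv u r| ^ (p - 2) * Lrad N p u r) - V r * (|u r| ^ (p - 2) * u r) ≤ 0)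
    (hvsup : ∀ r : ℝ, r₀ ≤ r → (r : EReal) < R₀ →
      0 ≤ -(|deriv v r| ^ (p - 2) * Lrad N p v r) - V r * (|v r| ^ (p - 2) * v r))
    (hstrict :
      (∀ r : ℝ, r₀ ≤ r → (r : EReal) < R₀ →
        -(|deriv u r| ^ (p - 2) * Lrad N p u r) - V r * (|u r| ^ (p - 2) * u r) < 0) ∨
      (∀ r : ℝ, r₀ ≤ r → (r : EReal) < R₀ →
        0 < -(|deriv v r| ^ (p - 2) * Lrad N p v r) - V r * (|v r| ^ (p - 2) * v r))) :
    (∀ ρ : ℝ, r₀ < ρ → (ρ : EReal) < R₀ → deriv (fun r => u r / v r) ρ = 0 →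
      0 < deriv (deriv (fun r => u r / v r)) ρ) ∧
    (∀ ρ : ℝ, r₀ < ρ → (ρ : EReal) < R₀ → ¬ IsLocalMax (fun r => u r / v r) ρ) := by
  have hC2 : ∀ ρ, r₀ < ρ → (ρ : EReal) < R₀ → ContDiffAt ℝ 2 u ρ ∧ ContDiffAt ℝ 2 v ρ :=
    fun ρ h₀ h₁ => ⟨huC2.contDiffAt (setOf_le_and_coe_lt_mem_nhds h₀ h₁),
      hvC2.contDiffAt (setOf_le_and_coe_lt_mem_nhds h₀ h₁)⟩
  have hcrit : ∀ ρ, r₀ < ρ → (ρ : EReal) < R₀ → deriv (fun r => u r / v r) ρ = 0 →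
      0 < deriv (deriv (fun r => u r / v r)) ρ := by
    intro ρ h₀ h₁ hd
    obtain ⟨hu, hv⟩ := hC2 ρ h₀ h₁
    have hvρ := hv0 ρ h₀.le h₁
    have hu' := (deriv_div_eq_zero_iff (hu.differentiableAt (by simp))
      (hv.differentiableAt (by simp)) hvρ.ne').1 hd
    rw [deriv_deriv_div_of_deriv_div_eq_zero hu hv hvρ.ne' hd]
    refine div_pos (deriv_deriv_sub_pos_of_radialResidual hp (div_pos (hu0 ρ h₀.le h₁) hvρ)
      (div_mul_cancel₀ _ hvρ.ne').symm hu' (husub ρ h₀.le h₁) (hvsup ρ h₀.le h₁) ?_) hvρ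
    exact hstrict.imp (fun h => h ρ h₀.le h₁) (fun h => h ρ h₀.le h₁)
  refine ⟨hcrit, fun ρ h₀ h₁ hmax => ?_⟩
  obtain ⟨hu, hv⟩ := hC2 ρ h₀ h₁
  exact not_isLocalMax_of_deriv_deriv_pos (hcrit ρ h₀ h₁ hmax.deriv_eq_zero)
    hmax.deriv_eq_zero (hu.continuousAt.div hv.continuousAt (hv0 ρ h₀.le h₁).ne') hmax

/-- Maximum principle for the quotient of a positive strictly monotone radial
subsolution `u` and a positive strictly monotone radial supersolution `v` of
`-Δ_p u - V |u|^{p-2} u = 0`, one of which is strict: at any interior critical point of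
`u/v` the second derivative is positive; in particular `u/v` has no local maximum. -/
theorem quotient_maximum_principle (N : ℕ) (hN : 2 ≤ N) (p : ℝ) (hp : 1 < p)
    (r₀ : ℝ) (R₀ : EReal) (hr₀ : 0 < r₀) (hR : (r₀ : EReal) < R₀)
    (V u v : ℝ → ℝ)
    (hVcont : ContinuousOn V {r : ℝ | r₀ ≤ r ∧ (r : EReal) < R₀})
    (huC2 : ContDiffOn ℝ 2 u {r : ℝ | r₀ ≤ r ∧ (r : EReal) < R₀})
    (hvC2 : ContDiffOn ℝ 2 v {r : ℝ | r₀ ≤ r ∧ (r : EReal) < R₀})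
    (hu0 : ∀ r : ℝ, r₀ ≤ r → (r : EReal) < R₀ → 0 < u r)
    (hv0 : ∀ r : ℝ, r₀ ≤ r → (r : EReal) < R₀ → 0 < v r)
    (humono : (∀ r : ℝ, r₀ ≤ r → (r : EReal) < R₀ → deriv u r < 0) ∨
              (∀ r : ℝ, r₀ ≤ r → (r : EReal) < R₀ → 0 < deriv u r))
    (hvmono : (∀ r : ℝ, r₀ ≤ r → (r : EReal) < R₀ → deriv v r < 0) ∨
              (∀ r : ℝ, r₀ ≤ r → (r : EReal) < R₀ → 0 < deriv v r))
    (husub : ∀ r : ℝ, r₀ ≤ r → (r : EReal) < R₀ →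
      -(|deriv u r| ^ (p - 2) * Lrad N p u r) - V r * (|u r| ^ (p - 2) * u r) ≤ 0)
    (hvsup : ∀ r : ℝ, r₀ ≤ r → (r : EReal) < R₀ →
      0 ≤ -(|deriv v r| ^ (p - 2) * Lrad N p v r) - V r * (|v r| ^ (p - 2) * v r))
    (hstrict :
      (∀ r : ℝ, r₀ ≤ r → (r : EReal) < R₀ →
        -(|deriv u r| ^ (p - 2) * Lrad N p u r) - V r * (|u r| ^ (p - 2) * u r) < 0) ∨
      (∀ r : ℝ, r₀ ≤ r → (r : EReal) < R₀ →
        0 < -(|deriv v r| ^ (p - 2) * Lrad N p v r) - V r * (|v r| ^ (p - 2) * v r))) :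
    (∀ ρ : ℝ, r₀ < ρ → (ρ : EReal) < R₀ → deriv (fun r => u r / v r) ρ = 0 →
      0 < deriv (deriv (fun r => u r / v r)) ρ) ∧
    (∀ ρ : ℝ, r₀ < ρ → (ρ : EReal) < R₀ → ¬ IsLocalMax (fun r => u r / v r) ρ) :=
  quotient_maximum_principle_general N p hp r₀ R₀ V u v huC2 hvC2 hu0 hv0 husub hvsup hstrict
end

section
/- Let N ≥ 2 be an integer, p ≥ 2 real, 0 < r₀ < R₀ ≤ ∞, and let V be a continuous potential on [r₀,R₀) such that either V(r) > 0 for all r or V ≡ 0. Let u be a positive strictly monotone C² radial subsolution and v a positive strictly monotone C² radial supersolution of −Δ_p u − V|u|^{p−2}u = 0 on [r₀,R₀). Then at least one of the following holds: (i) (u/v)'(r) ≤ 0 for all r ∈ [r₀,R₀); or (ii) there exists ρ* ∈ [r₀,R₀) such that (u/v)'(r) ≥ 0 for all r ∈ [ρ*,R₀). -/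
/-!
Write `a = u'/u`, `b = v'/v` and `φ(t) = |t|^(p-2) t`. The sign of `(u/v)' = (u/v)(a - b)` is the
sign of the Picone-type quantity `G = r^(N-1) (φ(a) - φ(b))`, since `φ` is strictly increasing.
Because `(r^(N-1) φ(w'))' = r^(N-1) |w'|^(p-2) L w`, the sub- and supersolution inequalities give
`G' ≥ (p-1) r^(N-1) (|b|^p - |a|^p)`, the potential terms cancelling.
If `u'` and `v'` have opposite signs, the sign of `(u/v)'` is fixed. If both are negative, `G > 0`
means `b < a < 0`, so `G' ≥ 0` and `G` stays positive once it is positive; if both are positive,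
`G < 0` means `0 < a < b`, so `G' ≥ 0` and `G` stays nonnegative once it is nonnegative. Either way,
once `(u/v)'` is positive at some `ρ`, it is nonnegative from `ρ` on.
-/

open Set

theorem pos_of_deriv_nonneg_where_pos {f : ℝ → ℝ} {a b : ℝ} (hab : a ≤ b)
    (hf : ContinuousOn f (Icc a b)) (hf' : DifferentiableOn ℝ f (Ioo a b))
    (hmono : ∀ x ∈ Ioo a b, 0 < f x → 0 ≤ deriv f x) (ha : 0 < f a) : 0 < f b := by
  by_contra! hb
  set T := Icc a b ∩ f ⁻¹' Iic 0
  have hT : IsCompact T := isCompact_Icc.of_isClosed_subset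
    (hf.preimage_isClosed_of_isClosed isClosed_Icc isClosed_Iic) inter_subset_left
  obtain ⟨⟨has, hsb⟩, hs⟩ : sInf T ∈ T := hT.sInf_mem ⟨b, right_mem_Icc.2 hab, hb⟩
  set s := sInf T
  have has : a < s := has.lt_of_ne fun h => by rw [← h] at hs; exact (not_le.2 ha) hs
  have hpos : ∀ x ∈ Ico a s, 0 < f x := fun x hx => not_le.1 fun hx' =>
    hx.2.not_ge (csInf_le hT.bddBelow ⟨⟨hx.1, hx.2.le.trans hsb⟩, hx'⟩)
  have hmon : MonotoneOn f (Icc a s) := by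
    refine monotoneOn_of_deriv_nonneg (convex_Icc a s) (hf.mono (Icc_subset_Icc_right hsb)) ?_ ?_
      <;> rw [interior_Icc]
    · exact hf'.mono (Ioo_subset_Ioo_right hsb)
    · exact fun x hx => hmono x ⟨hx.1, hx.2.trans_le hsb⟩ (hpos x ⟨hx.1.le, hx.2⟩)
  exact (not_le.2 ha) ((hmon (left_mem_Icc.2 has.le) (right_mem_Icc.2 has.le) has.le).trans hs)

theorem nonneg_of_deriv_nonneg_where_neg {f : ℝ → ℝ} {a b : ℝ} (hab : a ≤ b)
    (hf : ContinuousOn f (Icc a b)) (hf' : DifferentiableOn ℝ f (Ioo a b))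
    (hmono : ∀ x ∈ Ioo a b, f x < 0 → 0 ≤ deriv f x) (ha : 0 ≤ f a) : 0 ≤ f b := by
  by_contra! hb
  have hneg : MapsTo (fun x => -x) (Icc (-b) (-a)) (Icc a b) :=
    fun x hx => ⟨le_neg.2 hx.2, neg_le.2 hx.1⟩
  have hneg' : MapsTo (fun x => -x) (Ioo (-b) (-a)) (Ioo a b) :=
    fun x hx => ⟨lt_neg.2 hx.2, neg_lt.2 hx.1⟩
  have := pos_of_deriv_nonneg_where_pos (f := fun x => -f (-x)) (neg_le_neg hab)
    (hf.comp continuous_neg.continuousOn hneg).neg ?_ ?_ (by simpa using hb)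
  · simp only [neg_neg, neg_pos] at this
    exact (not_le.2 this) ha
  · exact (hf'.comp (differentiableOn_neg _) hneg').neg
  · intro x hx hfx
    rw [deriv.fun_neg, deriv_comp_neg, neg_neg]
    exact hmono (-x) (hneg' hx) (neg_pos.1 hfx)

theorem le_or_eventually_ge_of_comparison_function {S : Set ℝ} (hS : S.OrdConnected)
    {a b G : ℝ → ℝ} (hG : ContinuousOn G S) (hGd : DifferentiableOn ℝ G (interior S))
    (hG' : ∀ x ∈ interior S, |a x| ≤ |b x| → 0 ≤ deriv G x)
    (hnonneg : ∀ x ∈ S, 0 ≤ G x ↔ b x ≤ a x) (hpos : ∀ x ∈ S, 0 < G x ↔ b x < a x)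
    (ha : (∀ x ∈ S, a x < 0) ∨ ∀ x ∈ S, 0 < a x) (hb : (∀ x ∈ S, b x < 0) ∨ ∀ x ∈ S, 0 < b x) :
    (∀ x ∈ S, a x ≤ b x) ∨ ∃ ρ ∈ S, ∀ x ∈ S, ρ ≤ x → b x ≤ a x := by
  refine or_iff_not_imp_left.2 fun h => ?_
  push Not at h
  obtain ⟨ρ, hρ, hba⟩ := h
  refine ⟨ρ, hρ, fun x hx hρx => ?_⟩
  have hIcc : Icc ρ x ⊆ S := hS.out hρ hx
  have hIoo : Ioo ρ x ⊆ interior S :=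
    interior_maximal (Ioo_subset_Icc_self.trans hIcc) isOpen_Ioo
  have hS' : ∀ y ∈ Ioo ρ x, y ∈ S := fun y hy => hIcc (Ioo_subset_Icc_self hy)
  rcases ha with ha | ha <;> rcases hb with hb | hb
  · refine ((hpos x hx).1 (pos_of_deriv_nonneg_where_pos hρx (hG.mono hIcc) (hGd.mono hIoo)
      (fun y hy hGy => hG' y (hIoo hy) ?_) ((hpos ρ hρ).2 hba))).le
    have := (hpos y (hS' y hy)).1 hGy
    rw [abs_of_neg (ha y (hS' y hy)), abs_of_neg (hb y (hS' y hy))]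
    linarith
  · linarith [ha ρ hρ, hb ρ hρ]
  · linarith [ha x hx, hb x hx]
  · refine (hnonneg x hx).1 (nonneg_of_deriv_nonneg_where_neg hρx (hG.mono hIcc)
      (hGd.mono hIoo) (fun y hy hGy => hG' y (hIoo hy) ?_) ((hnonneg ρ hρ).2 hba.le))
    have := (hnonneg y (hS' y hy)).not.1 hGy.not_ge
    rw [abs_of_pos (ha y (hS' y hy)), abs_of_pos (hb y (hS' y hy))]
    exact (not_le.1 this).le

theorem Set.OrdConnected.uniqueDiffOn {S : Set ℝ} (hS : S.OrdConnected) {a b : ℝ} (ha : a ∈ S)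
    (hb : b ∈ S) (hab : a < b) : UniqueDiffOn ℝ S :=
  uniqueDiffOn_convex hS.convex ((nonempty_Ioo.2 hab).mono
    (interior_maximal (Ioo_subset_Icc_self.trans (hS.out ha hb)) isOpen_Ioo))

theorem ContDiffOn.continuousOn_deriv_of_deriv_ne_zero {𝕜 F : Type*}
    [NontriviallyNormedField 𝕜] [NormedAddCommGroup F] [NormedSpace 𝕜 F] {f : 𝕜 → F}
    {S : Set 𝕜} (hf : ContDiffOn 𝕜 1 f S) (hS : UniqueDiffOn 𝕜 S) (hne : ∀ x ∈ S, deriv f x ≠ 0) :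
    ContinuousOn (deriv f) S :=
  (hf.continuousOn_derivWithin hS le_rfl).congr fun x hx =>
    ((differentiableAt_of_deriv_ne_zero (hne x hx)).derivWithin (hS x hx)).symm

theorem ContDiffOn.differentiableAt_deriv {𝕜 F : Type*} [NontriviallyNormedField 𝕜]
    [NormedAddCommGroup F] [NormedSpace 𝕜 F] {f : 𝕜 → F} {S : Set 𝕜} (hf : ContDiffOn 𝕜 2 f S)
    {x : 𝕜} (hx : x ∈ interior S) : DifferentiableAt 𝕜 (deriv f) x :=
  ((hf.contDiffAt (mem_interior_iff_mem_nhds.1 hx)).derivWithin (m := 1) le_rfl).differentiableAt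
    one_ne_zero

theorem deriv_div_eq_mul_logDeriv_sub {𝕜 : Type*} [NontriviallyNormedField 𝕜] {u v : 𝕜 → 𝕜}
    {x : 𝕜} (hu : DifferentiableAt 𝕜 u x) (hv : DifferentiableAt 𝕜 v x) (hu0 : u x ≠ 0)
    (hv0 : v x ≠ 0) :
    deriv (fun s => u s / v s) x = u x / v x * (logDeriv u x - logDeriv v x) := by
  rw [(hu.hasDerivAt.fun_div hv.hasDerivAt hv0).deriv, logDeriv_apply, logDeriv_apply]
  field_simp

theorem hasDerivAt_logDeriv {w : ℝ → ℝ} {r : ℝ} (hw : w r ≠ 0) (hw' : DifferentiableAt ℝ w r)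
    (hw'' : DifferentiableAt ℝ (deriv w) r) :
    HasDerivAt (logDeriv w) (deriv (deriv w) r / w r - logDeriv w r ^ 2) r := by
  refine (hw''.hasDerivAt.div hw'.hasDerivAt hw).congr_deriv ?_
  rw [logDeriv_apply]
  field_simp

theorem abs_div_rpow_mul_div {A X U q : ℝ} (hU : 0 < U) :
    |A / U| ^ q * (X / U) = |A| ^ q * X / (|U| ^ q * U) := by
  rw [abs_div, Real.div_rpow (abs_nonneg A) (abs_nonneg U)]
  field_simp

namespace PLaplacian

noncomputable def phi (p t : ℝ) : ℝ := |t| ^ (p - 2) * t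

variable {p : ℝ}

theorem phi_of_nonneg (hp : p ≠ 1) {t : ℝ} (ht : 0 ≤ t) : phi p t = t ^ (p - 1) := by
  rcases ht.eq_or_lt with rfl | ht
  · simp [phi, Real.zero_rpow (sub_ne_zero.2 hp)]
  · rw [phi, abs_of_pos ht, ← Real.rpow_add_one ht.ne']
    ring_nf

theorem phi_neg (t : ℝ) : phi p (-t) = -phi p t := by
  simp [phi]

theorem strictMono_phi (hp : 1 < p) : StrictMono (phi p) := by
  have hIci : StrictMonoOn (phi p) (Ici 0) := fun x hx y hy hxy => by
    rw [phi_of_nonneg hp.ne' hx, phi_of_nonneg hp.ne' hy]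
    exact Real.strictMonoOn_rpow_Ici_of_exponent_pos (by linarith) hx hy hxy
  refine StrictMonoOn.Iic_union_Ici (a := 0) (fun x hx y hy hxy => ?_) hIci
  have h := hIci (mem_Ici.2 (neg_nonneg.2 hy)) (mem_Ici.2 (neg_nonneg.2 hx)) (neg_lt_neg hxy)
  rw [phi_neg, phi_neg] at h
  exact neg_lt_neg_iff.1 h

theorem continuous_phi (hp : 2 ≤ p) : Continuous (phi p) :=
  (continuous_abs.rpow_const fun _ => Or.inr (by linarith)).mul continuous_id

theorem hasDerivAt_phi {t : ℝ} (ht : t ≠ 0) : HasDerivAt (phi p) ((p - 1) * |t| ^ (p - 2)) t := by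
  have h := ((hasDerivAt_abs ht).rpow_const (p := p - 2) (Or.inl (abs_ne_zero.2 ht))).mul
    (hasDerivAt_id' t)
  refine h.congr_deriv ?_
  have hs : (SignType.sign t : ℝ) * t = |t| := by
    rcases ht.lt_or_gt with h | h <;> simp [h, abs_of_neg, abs_of_pos]
  rw [Real.rpow_sub_one (abs_ne_zero.2 ht)]
  generalize |t| ^ (p - 2) = A
  field_simp
  linear_combination ((p - 2) * A) * hs

noncomputable def flux (N : ℕ) (p : ℝ) (w : ℝ → ℝ) (r : ℝ) : ℝ :=
  r ^ ((N : ℝ) - 1) * phi p (logDeriv w r)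

variable {N : ℕ} {w : ℝ → ℝ} {r : ℝ}

theorem hasDerivAt_flux (hr : 0 < r) (hw : w r ≠ 0) (hw' : deriv w r ≠ 0)
    (hw'' : DifferentiableAt ℝ (deriv w) r) :
    HasDerivAt (flux N p w) (r ^ ((N : ℝ) - 1) *
      (|logDeriv w r| ^ (p - 2) * (Lrad N p w r / w r) - (p - 1) * |logDeriv w r| ^ p)) r := by
  have ha : logDeriv w r ≠ 0 := div_ne_zero hw' hw
  refine ((Real.hasDerivAt_rpow_const (Or.inl hr.ne')).mul ((hasDerivAt_phi ha).comp r
    (hasDerivAt_logDeriv hw (differentiableAt_of_deriv_ne_zero hw') hw''))).congr_deriv ?_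
  have habs : |logDeriv w r| ^ p = |logDeriv w r| ^ (p - 2) * logDeriv w r ^ 2 := by
    rw [← sq_abs, ← Real.rpow_natCast, ← Real.rpow_add (abs_pos.2 ha)]
    norm_num
  simp only [Function.comp_apply, phi]
  rw [habs, Real.rpow_sub_one hr.ne', Lrad, logDeriv_apply]
  field_simp
  ring

theorem continuousOn_flux {S : Set ℝ} (hp : 2 ≤ p) (hS : ∀ x ∈ S, x ≠ 0) (hSu : UniqueDiffOn ℝ S)
    (hw : ContDiffOn ℝ 1 w S) (hw0 : ∀ x ∈ S, w x ≠ 0) (hw' : ∀ x ∈ S, deriv w x ≠ 0) :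
    ContinuousOn (flux N p w) S :=
  (continuousOn_id.rpow_const fun x hx => Or.inl (hS x hx)).mul
    ((continuous_phi hp).comp_continuousOn
      ((hw.continuousOn_deriv_of_deriv_ne_zero hSu hw').div hw.continuousOn hw0))

theorem flux_sub_flux_nonneg_iff {u v : ℝ → ℝ} (hp : 1 < p) (hr : 0 < r) :
    0 ≤ flux N p u r - flux N p v r ↔ logDeriv v r ≤ logDeriv u r := by
  rw [flux, flux, ← mul_sub, mul_nonneg_iff_of_pos_left (Real.rpow_pos_of_pos hr _), sub_nonneg,
    (strictMono_phi hp).le_iff_le]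

theorem flux_sub_flux_pos_iff {u v : ℝ → ℝ} (hp : 1 < p) (hr : 0 < r) :
    0 < flux N p u r - flux N p v r ↔ logDeriv v r < logDeriv u r := by
  rw [flux, flux, ← mul_sub, mul_pos_iff_of_pos_left (Real.rpow_pos_of_pos hr _), sub_pos,
    (strictMono_phi hp).lt_iff_lt]

theorem deriv_flux_sub_flux_nonneg {V u v : ℝ → ℝ} (hp : 1 ≤ p) (hr : 0 < r)
    (hu : 0 < u r) (hv : 0 < v r) (hu' : deriv u r ≠ 0) (hv' : deriv v r ≠ 0)
    (hu'' : DifferentiableAt ℝ (deriv u) r) (hv'' : DifferentiableAt ℝ (deriv v) r)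
    (hsub : -(|deriv u r| ^ (p - 2) * Lrad N p u r) - V r * (|u r| ^ (p - 2) * u r) ≤ 0)
    (hsup : 0 ≤ -(|deriv v r| ^ (p - 2) * Lrad N p v r) - V r * (|v r| ^ (p - 2) * v r))
    (hlog : |logDeriv u r| ≤ |logDeriv v r|) :
    0 ≤ deriv (flux N p u - flux N p v) r := by
  rw [((hasDerivAt_flux hr hu.ne' hu' hu'').sub (hasDerivAt_flux hr hv.ne' hv' hv'')).deriv,
    ← mul_sub]
  have hU : -V r ≤ |logDeriv u r| ^ (p - 2) * (Lrad N p u r / u r) := by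
    rw [logDeriv_apply, abs_div_rpow_mul_div hu,
      le_div_iff₀ (mul_pos (Real.rpow_pos_of_pos (abs_pos.2 hu.ne') _) hu)]
    linarith
  have hV : |logDeriv v r| ^ (p - 2) * (Lrad N p v r / v r) ≤ -V r := by
    rw [logDeriv_apply, abs_div_rpow_mul_div hv,
      div_le_iff₀ (mul_pos (Real.rpow_pos_of_pos (abs_pos.2 hv.ne') _) hv)]
    linarith
  have hpow : |logDeriv u r| ^ p ≤ |logDeriv v r| ^ p :=
    Real.rpow_le_rpow (abs_nonneg _) hlog (by linarith)
  refine mul_nonneg (Real.rpow_pos_of_pos hr _).le ?_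
  nlinarith [mul_le_mul_of_nonneg_left hpow (sub_nonneg.2 hp)]

theorem deriv_div_nonpos_or_eventually_nonneg {S : Set ℝ} (hS : S.OrdConnected)
    (hSu : UniqueDiffOn ℝ S) (hS0 : ∀ x ∈ S, 0 < x) (hp : 2 ≤ p) {V u v : ℝ → ℝ}
    (huC2 : ContDiffOn ℝ 2 u S) (hvC2 : ContDiffOn ℝ 2 v S)
    (hu0 : ∀ x ∈ S, 0 < u x) (hv0 : ∀ x ∈ S, 0 < v x)
    (humono : (∀ x ∈ S, deriv u x < 0) ∨ ∀ x ∈ S, 0 < deriv u x)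
    (hvmono : (∀ x ∈ S, deriv v x < 0) ∨ ∀ x ∈ S, 0 < deriv v x)
    (husub : ∀ x ∈ S,
      -(|deriv u x| ^ (p - 2) * Lrad N p u x) - V x * (|u x| ^ (p - 2) * u x) ≤ 0)
    (hvsup : ∀ x ∈ S,
      0 ≤ -(|deriv v x| ^ (p - 2) * Lrad N p v x) - V x * (|v x| ^ (p - 2) * v x)) :
    (∀ x ∈ S, deriv (fun s => u s / v s) x ≤ 0) ∨
      ∃ ρ ∈ S, ∀ x ∈ S, ρ ≤ x → 0 ≤ deriv (fun s => u s / v s) x := by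
  have hu' : ∀ x ∈ S, deriv u x ≠ 0 := fun x hx =>
    humono.elim (fun h => (h x hx).ne) fun h => (h x hx).ne'
  have hv' : ∀ x ∈ S, deriv v x ≠ 0 := fun x hx =>
    hvmono.elim (fun h => (h x hx).ne) fun h => (h x hx).ne'
  have hS0' : ∀ x ∈ S, x ≠ 0 := fun x hx => (hS0 x hx).ne'
  have hlog : (∀ x ∈ S, logDeriv u x ≤ logDeriv v x) ∨
      ∃ ρ ∈ S, ∀ x ∈ S, ρ ≤ x → logDeriv v x ≤ logDeriv u x := by
    refine le_or_eventually_ge_of_comparison_function hS (G := flux N p u - flux N p v)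
      ((continuousOn_flux hp hS0' hSu (huC2.of_le one_le_two) (fun x hx => (hu0 x hx).ne') hu').sub
        (continuousOn_flux hp hS0' hSu (hvC2.of_le one_le_two) (fun x hx => (hv0 x hx).ne') hv'))
      (fun x hx => ?_) (fun x hx => ?_)
      (fun x hx => flux_sub_flux_nonneg_iff (by linarith) (hS0 x hx))
      (fun x hx => flux_sub_flux_pos_iff (by linarith) (hS0 x hx))
      (humono.imp (fun h x hx => div_neg_of_neg_of_pos (h x hx) (hu0 x hx))
        fun h x hx => div_pos (h x hx) (hu0 x hx))
      (hvmono.imp (fun h x hx => div_neg_of_neg_of_pos (h x hx) (hv0 x hx))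
        fun h x hx => div_pos (h x hx) (hv0 x hx))
    all_goals have hxS := interior_subset hx
    · exact ((hasDerivAt_flux (hS0 x hxS) (hu0 x hxS).ne' (hu' x hxS)
        (huC2.differentiableAt_deriv hx)).sub (hasDerivAt_flux (hS0 x hxS) (hv0 x hxS).ne'
        (hv' x hxS) (hvC2.differentiableAt_deriv hx))).differentiableAt.differentiableWithinAt
    · exact deriv_flux_sub_flux_nonneg (by linarith) (hS0 x hxS) (hu0 x hxS) (hv0 x hxS)
        (hu' x hxS) (hv' x hxS) (huC2.differentiableAt_deriv hx) (hvC2.differentiableAt_deriv hx)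
        (husub x hxS) (hvsup x hxS)
  have hquot : ∀ x ∈ S,
      deriv (fun s => u s / v s) x = u x / v x * (logDeriv u x - logDeriv v x) := fun x hx =>
    deriv_div_eq_mul_logDeriv_sub (differentiableAt_of_deriv_ne_zero (hu' x hx))
      (differentiableAt_of_deriv_ne_zero (hv' x hx)) (hu0 x hx).ne' (hv0 x hx).ne'
  refine hlog.imp (fun h x hx => ?_) fun ⟨ρ, hρ, h⟩ => ⟨ρ, hρ, fun x hx hρx => ?_⟩ <;>
    rw [hquot x hx]
  · exact mul_nonpos_of_nonneg_of_nonpos (div_pos (hu0 x hx) (hv0 x hx)).le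
      (sub_nonpos.2 (h x hx))
  · exact mul_nonneg (div_pos (hu0 x hx) (hv0 x hx)).le (sub_nonneg.2 (h x hx hρx))

end PLaplacian

theorem quotient_monotonicity_dichotomy_general (N : ℕ) (p : ℝ) (hp : 2 ≤ p)
    (r₀ : ℝ) (R₀ : EReal) (hr₀ : 0 < r₀) (hR : (r₀ : EReal) < R₀)
    (V u v : ℝ → ℝ)
    (huC2 : ContDiffOn ℝ 2 u {r : ℝ | r₀ ≤ r ∧ (r : EReal) < R₀})
    (hvC2 : ContDiffOn ℝ 2 v {r : ℝ | r₀ ≤ r ∧ (r : EReal) < R₀})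
    (hu0 : ∀ r : ℝ, r₀ ≤ r → (r : EReal) < R₀ → 0 < u r)
    (hv0 : ∀ r : ℝ, r₀ ≤ r → (r : EReal) < R₀ → 0 < v r)
    (humono : (∀ r : ℝ, r₀ ≤ r → (r : EReal) < R₀ → deriv u r < 0) ∨
              (∀ r : ℝ, r₀ ≤ r → (r : EReal) < R₀ → 0 < deriv u r))
    (hvmono : (∀ r : ℝ, r₀ ≤ r → (r : EReal) < R₀ → deriv v r < 0) ∨
              (∀ r : ℝ, r₀ ≤ r → (r : EReal) < R₀ → 0 < deriv v r))
    (husub : ∀ r : ℝ, r₀ ≤ r → (r : EReal) < R₀ →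
      -(|deriv u r| ^ (p - 2) * Lrad N p u r) - V r * (|u r| ^ (p - 2) * u r) ≤ 0)
    (hvsup : ∀ r : ℝ, r₀ ≤ r → (r : EReal) < R₀ →
      0 ≤ -(|deriv v r| ^ (p - 2) * Lrad N p v r) - V r * (|v r| ^ (p - 2) * v r)) :
    (∀ r : ℝ, r₀ ≤ r → (r : EReal) < R₀ → deriv (fun s => u s / v s) r ≤ 0) ∨
    (∃ ρ : ℝ, r₀ ≤ ρ ∧ (ρ : EReal) < R₀ ∧
      ∀ r : ℝ, ρ ≤ r → (r : EReal) < R₀ → 0 ≤ deriv (fun s => u s / v s) r) := by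
  set S := {r : ℝ | r₀ ≤ r ∧ (r : EReal) < R₀}
  have hS : S.OrdConnected :=
    ⟨fun x hx y hy z hz => ⟨hx.1.trans hz.1, (EReal.coe_le_coe_iff.2 hz.2).trans_lt hy.2⟩⟩
  obtain ⟨r₁, hr₀₁, hr₁⟩ := EReal.exists_between_coe_real hR
  have hSu : UniqueDiffOn ℝ S :=
    hS.uniqueDiffOn ⟨le_rfl, hR⟩ ⟨(EReal.coe_lt_coe_iff.1 hr₀₁).le, hr₁⟩
      (EReal.coe_lt_coe_iff.1 hr₀₁)
  rcases PLaplacian.deriv_div_nonpos_or_eventually_nonneg hS hSu (fun x hx => hr₀.trans_le hx.1)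
    hp huC2 hvC2 (fun x hx => hu0 x hx.1 hx.2) (fun x hx => hv0 x hx.1 hx.2)
    (humono.imp (fun h x hx => h x hx.1 hx.2) fun h x hx => h x hx.1 hx.2)
    (hvmono.imp (fun h x hx => h x hx.1 hx.2) fun h x hx => h x hx.1 hx.2)
    (fun x hx => husub x hx.1 hx.2) (fun x hx => hvsup x hx.1 hx.2) with h | ⟨ρ, hρ, h⟩
  · exact Or.inl fun r h₁ h₂ => h r ⟨h₁, h₂⟩
  · exact Or.inr ⟨ρ, hρ.1, hρ.2, fun r hρr h₂ => h r ⟨hρ.1.trans hρr, h₂⟩ hρr⟩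

/-- For `p ≥ 2` and a potential `V` which is either everywhere positive or identically
zero, the quotient `u/v` of a positive strictly monotone radial subsolution and a
positive strictly monotone radial supersolution is either non-increasing on all of
`[r₀, R₀)` or eventually non-decreasing. -/
theorem quotient_monotonicity_dichotomy (N : ℕ) (hN : 2 ≤ N) (p : ℝ) (hp : 2 ≤ p)
    (r₀ : ℝ) (R₀ : EReal) (hr₀ : 0 < r₀) (hR : (r₀ : EReal) < R₀)
    (V u v : ℝ → ℝ)
    (hVcont : ContinuousOn V {r : ℝ | r₀ ≤ r ∧ (r : EReal) < R₀})
    (hVsign : (∀ r : ℝ, r₀ ≤ r → (r : EReal) < R₀ → 0 < V r) ∨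
              (∀ r : ℝ, r₀ ≤ r → (r : EReal) < R₀ → V r = 0))
    (huC2 : ContDiffOn ℝ 2 u {r : ℝ | r₀ ≤ r ∧ (r : EReal) < R₀})
    (hvC2 : ContDiffOn ℝ 2 v {r : ℝ | r₀ ≤ r ∧ (r : EReal) < R₀})
    (hu0 : ∀ r : ℝ, r₀ ≤ r → (r : EReal) < R₀ → 0 < u r)
    (hv0 : ∀ r : ℝ, r₀ ≤ r → (r : EReal) < R₀ → 0 < v r)
    (humono : (∀ r : ℝ, r₀ ≤ r → (r : EReal) < R₀ → deriv u r < 0) ∨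
              (∀ r : ℝ, r₀ ≤ r → (r : EReal) < R₀ → 0 < deriv u r))
    (hvmono : (∀ r : ℝ, r₀ ≤ r → (r : EReal) < R₀ → deriv v r < 0) ∨
              (∀ r : ℝ, r₀ ≤ r → (r : EReal) < R₀ → 0 < deriv v r))
    (husub : ∀ r : ℝ, r₀ ≤ r → (r : EReal) < R₀ →
      -(|deriv u r| ^ (p - 2) * Lrad N p u r) - V r * (|u r| ^ (p - 2) * u r) ≤ 0)
    (hvsup : ∀ r : ℝ, r₀ ≤ r → (r : EReal) < R₀ →
      0 ≤ -(|deriv v r| ^ (p - 2) * Lrad N p v r) - V r * (|v r| ^ (p - 2) * v r)) :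
    (∀ r : ℝ, r₀ ≤ r → (r : EReal) < R₀ → deriv (fun s => u s / v s) r ≤ 0) ∨
    (∃ ρ : ℝ, r₀ ≤ ρ ∧ (ρ : EReal) < R₀ ∧
      ∀ r : ℝ, ρ ≤ r → (r : EReal) < R₀ → 0 ≤ deriv (fun s => u s / v s) r) :=
  quotient_monotonicity_dichotomy_general N p hp r₀ R₀ hr₀ hR V u v huC2 hvC2 hu0 hv0 humono hvmono
    husub hvsup
end
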